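/- arXiv:1005.2248 — 3 statements merged into one kernel-verified Lean document; each statement's English description precedes it below -/
import Mathlib

section
/- For every prime p ≥ 3, the complete graph K_{2p−1} has a proper (2p−1)-edge-colouring in which the union of any two colour classes forms a Hamiltonian path of K_{2p−1}; consequently there exist proper (2p−1)-edge-colourings of K_{2p−1} that are not Kempe equivalent, i.e. κ_E(K_{2p−1}, 2p−1) > 1. -/
/-!
Kotzig's one-factorisation `GK₂ₚ` colours the edges of the complete graph on `ZMod p × Bool`
by the vertices other than `(0, true)`. For an odd prime `p` the two perfect matchings of any
two colours form a single Hamiltonian cycle, written down explicitly for each of the three kinds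
of colour pairs: along it the `ZMod p`-coordinates on each side are translates of multiples of a
nonzero element, which exhaust `ZMod p` because `p` is prime. Deleting the vertex `(0, true)`
leaves a proper `(2p-1)`-edge-colouring of `K₂ₚ₋₁` in which any two colour classes form a
Hamiltonian path.

All bichromatic subgraphs of that colouring are connected, so every Kempe change merely swaps
two colours and its Kempe class consists of its colour permutations. Exchanging two vertices
gives a proper colouring outside this class.
-/

open SimpleGraph

/-- A proper `k`-edge-colouring of `G`: distinct edges sharing a vertex receive
different colours. -/
def IsProperEdgeColoring {V : Type*} (G : SimpleGraph V) (k : ℕ)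
    (φ : G.edgeSet → Fin k) : Prop :=
  ∀ e₁ e₂ : G.edgeSet, e₁ ≠ e₂ →
    (∃ v : V, v ∈ (e₁ : Sym2 V) ∧ v ∈ (e₂ : Sym2 V)) → φ e₁ ≠ φ e₂

/-- The spanning subgraph of `G` consisting of the edges coloured `a` or `b` under `φ`. -/
def kempeGraph {V : Type*} (G : SimpleGraph V) {k : ℕ} (φ : G.edgeSet → Fin k)
    (a b : Fin k) : SimpleGraph V where
  Adj u v := ∃ h : G.Adj u v, φ ⟨s(u, v), h⟩ = a ∨ φ ⟨s(u, v), h⟩ = b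
  symm := by
    constructor
    rintro u v ⟨h, hc⟩
    refine ⟨h.symm, ?_⟩
    have he : (⟨s(v, u), h.symm⟩ : G.edgeSet) = ⟨s(u, v), h⟩ :=
      Subtype.ext (Sym2.eq_swap)
    rw [he]
    exact hc
  loopless := by
    constructor
    rintro v ⟨h, _⟩
    exact G.loopless.irrefl v h

/-- The edge `e` lies in the Kempe chain determined by the colours `a, b` and the
connected component of the vertex `w` in the `(a,b)`-subgraph. -/
def InKempeChain {V : Type*} (G : SimpleGraph V) {k : ℕ} (φ : G.edgeSet → Fin k)
    (a b : Fin k) (w : V) (e : G.edgeSet) : Prop :=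
  (φ e = a ∨ φ e = b) ∧ ∃ u ∈ (e : Sym2 V), (kempeGraph G φ a b).Reachable w u

/-- `ψ` is obtained from `φ` by a single Kempe change: the colours `a` and `b` are
swapped on one connected component of the subgraph induced by the edges coloured
`a` or `b`, and all other edges keep their colour. -/
def KempeChange {V : Type*} (G : SimpleGraph V) (k : ℕ)
    (φ ψ : G.edgeSet → Fin k) : Prop :=
  ∃ (a b : Fin k) (w : V), ∀ e : G.edgeSet,
    (InKempeChain G φ a b w e → ψ e = Equiv.swap a b (φ e)) ∧
    (¬ InKempeChain G φ a b w e → ψ e = φ e)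

/-- Kempe equivalence: `ψ` is obtained from `φ` by a finite sequence of Kempe changes. -/
def KempeEquiv {V : Type*} (G : SimpleGraph V) (k : ℕ)
    (φ ψ : G.edgeSet → Fin k) : Prop :=
  Relation.ReflTransGen (KempeChange G k) φ ψ

/-- Two edge-colourings differ only by a permutation of the colour set. -/
def PermRelated {V : Type*} (G : SimpleGraph V) (k : ℕ)
    (φ ψ : G.edgeSet → Fin k) : Prop :=
  ∃ σ : Equiv.Perm (Fin k), ∀ e : G.edgeSet, ψ e = σ (φ e)

/-- Kempe equivalence with colourings differing by a permutation of colours identified. -/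
def KempePermEquiv {V : Type*} (G : SimpleGraph V) (k : ℕ)
    (φ ψ : G.edgeSet → Fin k) : Prop :=
  ∃ ψ' : G.edgeSet → Fin k, PermRelated G k ψ ψ' ∧ KempeEquiv G k φ ψ'

section Kempe

variable {V : Type*} {G : SimpleGraph V} {k : ℕ}

lemma PermRelated.symm {φ ψ : G.edgeSet → Fin k} (h : PermRelated G k φ ψ) :
    PermRelated G k ψ φ := by
  obtain ⟨σ, hσ⟩ := h
  exact ⟨σ.symm, fun e => by rw [hσ, Equiv.symm_apply_apply]⟩

lemma PermRelated.trans {φ χ ψ : G.edgeSet → Fin k} (h₁ : PermRelated G k φ χ)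
    (h₂ : PermRelated G k χ ψ) : PermRelated G k φ ψ := by
  obtain ⟨σ, hσ⟩ := h₁
  obtain ⟨τ, hτ⟩ := h₂
  exact ⟨σ.trans τ, fun e => by rw [hτ, hσ, Equiv.trans_apply]⟩

lemma kempeGraph_perm_comp (φ : G.edgeSet → Fin k) (σ : Equiv.Perm (Fin k)) (a b : Fin k) :
    kempeGraph G (fun e => σ (φ e)) a b = kempeGraph G φ (σ.symm a) (σ.symm b) := by
  ext u v
  simp only [kempeGraph, Equiv.eq_symm_apply]

def KempeConnected (G : SimpleGraph V) (φ : G.edgeSet → Fin k) : Prop :=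
  ∀ a b, a ≠ b → (kempeGraph G φ a b).Preconnected

lemma KempeConnected.of_permRelated {φ ψ : G.edgeSet → Fin k} (hφ : KempeConnected G φ)
    (h : PermRelated G k φ ψ) : KempeConnected G ψ := by
  obtain ⟨σ, hσ⟩ := h
  intro a b hab
  rw [show ψ = fun e => σ (φ e) from funext hσ, kempeGraph_perm_comp]
  exact hφ _ _ (σ.symm.injective.ne hab)

lemma KempeChange.permRelated {φ ψ : G.edgeSet → Fin k} (hφ : KempeConnected G φ)
    (h : KempeChange G k φ ψ) : PermRelated G k φ ψ := by
  obtain ⟨a, b, w, hψ⟩ := h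
  refine ⟨Equiv.swap a b, fun e => ?_⟩
  by_cases he : InKempeChain G φ a b w e
  · exact (hψ e).1 he
  rw [(hψ e).2 he]
  rcases eq_or_ne a b with rfl | hab
  · rw [Equiv.swap_self, Equiv.refl_apply]
  have hchain : φ e = a ∨ φ e = b → InKempeChain G φ a b w e := fun hc =>
    ⟨hc, _, Sym2.out_fst_mem _, hφ a b hab w _⟩
  exact (Equiv.swap_apply_of_ne_of_ne (fun h => he (hchain (.inl h)))
    (fun h => he (hchain (.inr h)))).symm

lemma KempeEquiv.permRelated {φ ψ : G.edgeSet → Fin k} (hφ : KempeConnected G φ)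
    (h : KempeEquiv G k φ ψ) : PermRelated G k φ ψ := by
  induction h with
  | refl => exact ⟨1, fun _ => rfl⟩
  | tail _ hstep ih => exact ih.trans (hstep.permRelated (hφ.of_permRelated ih))

lemma KempeConnected.not_kempePermEquiv {φ ψ : G.edgeSet → Fin k} (hφ : KempeConnected G φ)
    (h : ¬ PermRelated G k φ ψ) : ¬ KempePermEquiv G k φ ψ := by
  rintro ⟨ψ', hψψ', hφψ'⟩
  exact h ((hφψ'.permRelated hφ).trans hψψ'.symm)

lemma SimpleGraph.Walk.IsHamiltonian.preconnected [DecidableEq V] {H : SimpleGraph V} {u v : V}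
    {w : H.Walk u v} (hw : w.IsHamiltonian) : H.Preconnected := fun x y =>
  ((w.takeUntil x (hw.mem_support x)).reverse.append (w.takeUntil y (hw.mem_support y))).reachable

end Kempe

section ProperColouring

open Finset

variable {V : Type*} {G : SimpleGraph V} {k : ℕ} {φ : G.edgeSet → Fin k}

lemma kempeGraph_le (φ : G.edgeSet → Fin k) (a b : Fin k) : kempeGraph G φ a b ≤ G :=
  fun _ _ h => h.1

lemma mem_edgeSet_kempeGraph {a b : Fin k} (e : G.edgeSet) :
    (e : Sym2 V) ∈ (kempeGraph G φ a b).edgeSet ↔ φ e = a ∨ φ e = b := by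
  obtain ⟨e, he⟩ := e
  induction e using Sym2.ind with
  | h x y => exact ⟨fun ⟨_, h⟩ => h, fun h => ⟨he, h⟩⟩

/-- Each colour class is a matching. -/
lemma IsProperEdgeColoring.two_mul_card_le [Fintype V] [Fintype G.edgeSet]
    (hφ : IsProperEdgeColoring G k φ) (a : Fin k) :
    2 * #{e | φ e = a} ≤ Fintype.card V := by
  classical
  have hdisj : (({e | φ e = a} : Finset G.edgeSet) : Set G.edgeSet).PairwiseDisjoint
      fun e => (e : Sym2 V).toFinset := by
    intro e he f hf hef
    rw [Function.onFun, Finset.disjoint_left]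
    intro v hve hvf
    exact hφ e f hef ⟨v, Sym2.mem_toFinset.1 hve, Sym2.mem_toFinset.1 hvf⟩
      ((mem_filter.1 he).2.trans (mem_filter.1 hf).2.symm)
  calc 2 * #{e | φ e = a}
      = ∑ e ∈ {e | φ e = a}, #(e : Sym2 V).toFinset := by
        rw [sum_congr rfl fun e _ => Sym2.card_toFinset_of_not_isDiag _
          (G.not_isDiag_of_mem_edgeSet e.2), sum_const, smul_eq_mul, mul_comm]
    _ = #(({e | φ e = a} : Finset G.edgeSet).biUnion fun e => (e : Sym2 V).toFinset) :=
        (card_biUnion hdisj).symm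
    _ ≤ Fintype.card V := card_le_univ _

/-- On an odd number of vertices a Hamiltonian path has as many edges as two colour classes can
have at most, so a Hamiltonian path of the Kempe graph uses every edge of that graph. -/
lemma IsProperEdgeColoring.exists_isHamiltonian_edges_iff [Fintype V] [DecidableEq V]
    [Fintype G.edgeSet] (hφ : IsProperEdgeColoring G k φ) (hV : Odd (Fintype.card V))
    {a b : Fin k} {u v : V} {w : (kempeGraph G φ a b).Walk u v} (hw : w.IsHamiltonian) :
    ∃ (u v : V) (w : G.Walk u v), w.IsPath ∧ w.IsHamiltonian ∧
      ∀ e : G.edgeSet, (e : Sym2 V) ∈ w.edges ↔ (φ e = a ∨ φ e = b) := by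
  refine ⟨u, v, w.mapLe (kempeGraph_le φ a b), hw.isPath.mapLe _,
    fun x => by simpa only [Walk.support_mapLe_eq_support] using hw x, fun e => ?_⟩
  rw [Walk.edges_mapLe_eq_edges]
  have hcol : ∀ e : G.edgeSet, (e : Sym2 V) ∈ w.edges → φ e = a ∨ φ e = b := fun e he =>
    mem_edgeSet_kempeGraph e |>.1 (w.edges_subset_edgeSet he)
  refine ⟨hcol e, fun he => ?_⟩
  set C : Finset (Sym2 V) := ({e | φ e = a ∨ φ e = b} : Finset G.edgeSet).map
    (Function.Embedding.subtype _)
  have hsub : w.edges.toFinset ⊆ C := fun x hx => by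
    have hxG := edgeSet_mono (kempeGraph_le φ a b) (w.edges_subset_edgeSet (List.mem_toFinset.1 hx))
    exact mem_map.2
      ⟨⟨x, hxG⟩, mem_filter.2 ⟨mem_univ _, hcol ⟨x, hxG⟩ (List.mem_toFinset.1 hx)⟩, rfl⟩
  have hcard : #C ≤ #w.edges.toFinset := by
    have ha := hφ.two_mul_card_le a
    have hb := hφ.two_mul_card_le b
    have hlen := hw.length_eq
    rw [card_map, filter_or, List.toFinset_card_of_nodup hw.isPath.edges_nodup, Walk.length_edges]
    obtain ⟨m, hm⟩ := hV
    have := card_union_le ({e | φ e = a} : Finset G.edgeSet) {e | φ e = b}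
    omega
  have hCE := eq_of_subset_of_card_le hsub hcard
  exact List.mem_toFinset.1 (hCE ▸ mem_map.2 ⟨e, mem_filter.2 ⟨mem_univ _, he⟩, rfl⟩)

lemma IsProperEdgeColoring.comp_iso {W : Type*} {G' : SimpleGraph W}
    (hφ : IsProperEdgeColoring G k φ) (f : G' ≃g G) :
    IsProperEdgeColoring G' k fun e => φ (f.mapEdgeSet e) := by
  rintro e₁ e₂ hne ⟨v, h₁, h₂⟩
  exact hφ _ _ (f.mapEdgeSet.injective.ne hne)
    ⟨f v, Sym2.mem_map.2 ⟨v, h₁, rfl⟩, Sym2.mem_map.2 ⟨v, h₂, rfl⟩⟩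

end ProperColouring

section Relabel

open Finset

variable {V : Type*} {k : ℕ} {φ : (completeGraph V).edgeSet → Fin k}

/-- Exchanging the vertices `A` and `O` moves the edge `OB` onto `AB` and fixes `CD`; if `AB` and
`CD` have the same colour, the relabelled colouring gives `OB` and `CD` the same colour, which
no recolouring of `φ` does since `OB` and `AB` meet. -/
lemma not_permRelated_comp_swap [DecidableEq V] (hφ : IsProperEdgeColoring _ k φ)
    {A B C D O : V} (hAB : A ≠ B) (hCD : C ≠ D) (hOA : O ≠ A) (hOB : O ≠ B) (hCA : C ≠ A)
    (hCO : C ≠ O) (hDA : D ≠ A) (hDO : D ≠ O)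
    (hcol : φ ⟨s(A, B), hAB⟩ = φ ⟨s(C, D), hCD⟩) :
    ¬ PermRelated _ k φ fun e => φ ((Iso.completeGraph (Equiv.swap A O)).mapEdgeSet e) := by
  rintro ⟨σ, hσ⟩
  have hOB_AB : φ ⟨s(O, B), hOB⟩ ≠ φ ⟨s(A, B), hAB⟩ :=
    hφ _ _ (ne_of_apply_ne Subtype.val (by simp [hOA, hOB]))
      ⟨B, Sym2.mem_mk_right _ _, Sym2.mem_mk_right _ _⟩
  have hmove : (Iso.completeGraph (Equiv.swap A O)).mapEdgeSet ⟨s(O, B), hOB⟩ = ⟨s(A, B), hAB⟩ :=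
    Subtype.ext (show Sym2.map (Equiv.swap A O) s(O, B) = s(A, B) by
      simp [Equiv.swap_apply_of_ne_of_ne hAB.symm hOB.symm])
  have hfix : (Iso.completeGraph (Equiv.swap A O)).mapEdgeSet ⟨s(C, D), hCD⟩ = ⟨s(C, D), hCD⟩ :=
    Subtype.ext (show Sym2.map (Equiv.swap A O) s(C, D) = s(C, D) by
      simp [Equiv.swap_apply_of_ne_of_ne hCA hCO, Equiv.swap_apply_of_ne_of_ne hDA hDO])
  have h₁ := hσ ⟨s(O, B), hOB⟩
  have h₂ := hσ ⟨s(C, D), hCD⟩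
  simp only [hmove, hfix] at h₁ h₂
  exact hOB_AB (σ.injective (h₁.symm.trans (hcol.trans (h₂.trans (congrArg σ hcol.symm)))))

lemma IsProperEdgeColoring.exists_not_permRelated [Fintype V] [DecidableEq V]
    (hφ : IsProperEdgeColoring _ k φ) (hV : 5 ≤ Fintype.card V)
    (hk : k < (Fintype.card V).choose 2) :
    ∃ ψ, IsProperEdgeColoring (completeGraph V) k ψ ∧ ¬ PermRelated _ k φ ψ := by
  obtain ⟨⟨e, he⟩, ⟨f, hf⟩, hef, hcol⟩ := Fintype.exists_ne_map_eq_of_card_lt φ (by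
    rwa [Fintype.card_fin, ← edgeFinset_card, card_edgeFinset_top_eq_card_choose_two])
  induction e using Sym2.ind with | h A B => ?_
  induction f using Sym2.ind with | h C D => ?_
  have hmeet : ∀ v, v ∈ s(A, B) → v ∉ s(C, D) := fun v h₁ h₂ => hφ _ _ hef ⟨v, h₁, h₂⟩ hcol
  obtain ⟨O, -, hO⟩ := exists_mem_notMem_of_card_lt_card
    (s := {A, B, C, D}) (t := univ) ((card_le_four).trans_lt (by rw [card_univ]; omega))
  simp only [mem_insert, mem_singleton, not_or] at hO
  simp only [Sym2.mem_iff, not_or] at hmeet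
  refine ⟨_, hφ.comp_iso (Iso.completeGraph (Equiv.swap A O)), not_permRelated_comp_swap hφ he hf
    hO.1 hO.2.1 ?_ (Ne.symm hO.2.2.1) ?_ (Ne.symm hO.2.2.2) hcol⟩
  · exact fun h => (hmeet A (.inl rfl)).1 h.symm
  · exact fun h => (hmeet A (.inl rfl)).2 h.symm

end Relabel

section CycleSeq

variable {α : Type*} {R S : α → α → Prop} {n : ℕ} {f : ℕ → α}

structure IsCycleSeq (R : α → α → Prop) (n : ℕ) (f : ℕ → α) : Prop where
  injOn : Set.InjOn f (Set.Iic n)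
  rel_succ : ∀ t < n, R (f t) (f (t + 1))
  rel_last : R (f n) (f 0)

lemma IsCycleSeq.mono (hf : IsCycleSeq R n f) (hRS : ∀ x y, R x y → S x y) :
    IsCycleSeq S n f :=
  ⟨hf.injOn, fun t ht => hRS _ _ (hf.rel_succ t ht), hRS _ _ hf.rel_last⟩

lemma IsCycleSeq.exists_path [Fintype α] (hf : IsCycleSeq R n f)
    (hα : Fintype.card α = n + 1) (x : α) :
    ∃ L : List {y // y ≠ x}, L.Nodup ∧ (∀ y, y ∈ L) ∧ L.IsChain fun y z => y ≠ z ∧ R y.1 z.1 := by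
  set g : Fin (n + 1) → α := fun t => f t
  have hg : g.Bijective := by
    refine (Fintype.bijective_iff_injective_and_card g).2 ⟨fun s t h => Fin.ext ?_, by simp [hα]⟩
    exact hf.injOn (Set.mem_Iic.2 (Nat.lt_succ_iff.1 s.2)) (Set.mem_Iic.2 (Nat.lt_succ_iff.1 t.2)) h
  have hgR : ∀ t, R (g t) (g (t + 1)) := by
    intro t
    simp only [g, Fin.val_add_one]
    split_ifs with ht
    · simpa [ht] using hf.rel_last
    · exact hf.rel_succ t (Fin.val_lt_last ht)
  obtain ⟨s, hs⟩ := hg.2 x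
  -- rotate the cycle so that `x` comes last
  set c : Fin (n + 1) → α := g ∘ Equiv.addRight (s + 1)
  have hc : c.Bijective := hg.comp (Equiv.bijective _)
  have hcx : c (Fin.last n) = x := by
    rw [← hs]
    simp only [c, Function.comp_apply, Equiv.coe_addRight]
    rw [← add_assoc, add_right_comm, Fin.last_add_one, zero_add]
  have hne : ∀ t : Fin n, c t.castSucc ≠ x := fun t h =>
    Fin.castSucc_ne_last t (hc.1 (h.trans hcx.symm))
  refine ⟨List.ofFn fun t : Fin n => ⟨c t.castSucc, hne t⟩, ?_, fun y => ?_, ?_⟩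
  · exact List.nodup_ofFn.2 fun s t h =>
      Fin.castSucc_injective _ (hc.1 (congrArg Subtype.val h))
  · obtain ⟨t, ht⟩ := hc.2 y
    obtain ⟨t', rfl⟩ := Fin.exists_castSucc_eq (i := t) |>.2 fun h => y.2 (by rw [← ht, h, hcx])
    exact List.mem_ofFn.2 ⟨t', Subtype.ext ht⟩
  · refine List.isChain_ofFn.2 fun i hi => ⟨fun h => ?_, ?_⟩
    · have := hc.1 (congrArg Subtype.val h)
      simp [Fin.ext_iff] at this
    · have hsucc : (⟨i + 1, hi⟩ : Fin n).castSucc = (⟨i, by omega⟩ : Fin n).castSucc + 1 :=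
        Fin.ext (by rw [Fin.val_add_one_of_lt (Fin.castSucc_lt_last _)]; rfl)
      simpa only [hsucc, c, Function.comp_apply, Equiv.coe_addRight, add_right_comm] using
        hgR ((⟨i, by omega⟩ : Fin n).castSucc + (s + 1))

end CycleSeq

namespace ZMod

variable {p : ℕ}

lemma two_ne_zero_of_ne_two [Fact p.Prime] (hp2 : p ≠ 2) : (2 : ZMod p) ≠ 0 :=
  Ring.two_ne_zero ((ringChar_zmod_n p).symm ▸ hp2)

lemma natCast_pred [NeZero p] : ((p - 1 : ℕ) : ZMod p) = -1 := by
  rw [Nat.cast_pred (NeZero.pos p), natCast_self, zero_sub]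

lemma eq_of_intCast_eq_of_even_sub (hp : Odd p) {a b : ℤ} (h : (a : ZMod p) = b)
    (heven : Even (a - b)) (hlt : |a - b| < 2 * p) : a = b := by
  obtain ⟨d, hd⟩ := (intCast_eq_intCast_iff_dvd_sub b a p).1 h.symm
  have hp0 : (0 : ℤ) < p := by exact_mod_cast hp.pos
  have hpodd : ¬ Even (p : ℤ) := by rw [Int.not_even_iff_odd]; exact_mod_cast hp
  rw [hd, Int.even_mul, or_iff_right hpodd] at heven
  rw [hd, abs_mul, abs_of_pos hp0] at hlt
  obtain ⟨m, rfl⟩ := heven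
  have : |m + m| < 2 := lt_of_mul_lt_mul_left (by linarith) hp0.le
  have hm : m = 0 := by rw [abs_lt] at this; omega
  rw [hm, add_zero, mul_zero] at hd
  linarith

end ZMod

namespace Kotzig

variable {p : ℕ} [Fact p.Prime]

variable (p) in
abbrev apex : ZMod p × Bool := (0, true)

/-- Kotzig's perfect one-factorisation `GK₂ₚ` of the complete graph on `ZMod p × Bool`: colour
`(i, false)` joins `(x, ε)` to `(2i - x, ε)` and `(i, false)` to `(i, true)`; colour `(j, true)`
joins `(x, false)` to `(x + j, true)`. The colour `apex p` is never used. -/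
def colour : ZMod p × Bool → ZMod p × Bool → ZMod p × Bool
  | (x, false), (y, false) | (x, true), (y, true) => ((x + y) / 2, false)
  | (x, false), (y, true) | (y, true), (x, false) => if x = y then (x, false) else (y - x, true)

def partner : ZMod p × Bool → ZMod p × Bool → ZMod p × Bool
  | (i, false), (x, ε) => if x = i then (i, !ε) else (2 * i - x, ε)
  | (j, true), (x, false) => (x + j, true)
  | (j, true), (x, true) => (x - j, false)

lemma colour_comm (u v : ZMod p × Bool) : colour u v = colour v u := by
  rcases u with ⟨x, _ | _⟩ <;> rcases v with ⟨y, _ | _⟩ <;> simp [colour, add_comm, eq_comm]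

lemma colour_ne_apex {u v : ZMod p × Bool} (h : u ≠ v) : colour u v ≠ apex p := by
  rcases u with ⟨x, _ | _⟩ <;> rcases v with ⟨y, _ | _⟩ <;>
    simp only [colour] <;> try split_ifs
  all_goals simp_all [sub_eq_zero, eq_comm]

lemma eq_partner_colour (hp2 : p ≠ 2) {u v : ZMod p × Bool} (h : u ≠ v) :
    v = partner (colour u v) u := by
  have h2 := ZMod.two_ne_zero_of_ne_two hp2
  have half : ∀ x y : ZMod p, x = (x + y) / 2 ↔ y = x := fun x y => by
    rw [eq_div_iff h2]; constructor <;> intro h <;> linear_combination -h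
  rcases u with ⟨x, _ | _⟩ <;> rcases v with ⟨y, _ | _⟩ <;> simp only [colour] <;> try split_ifs
  all_goals simp_all [partner, mul_div_cancel₀, eq_comm]

lemma colour_injective (hp2 : p ≠ 2) {u v w : ZMod p × Bool} (hv : u ≠ v) (hw : u ≠ w)
    (h : colour u v = colour u w) : v = w := by
  rw [eq_partner_colour hp2 hv, eq_partner_colour hp2 hw, h]

lemma colour_same (hp2 : p ≠ 2) (ε : Bool) {x y i : ZMod p} (h : x + y = 2 * i) :
    colour (x, ε) (y, ε) = (i, false) := by
  cases ε <;> simp [colour, h, mul_div_cancel_left₀ _ (ZMod.two_ne_zero_of_ne_two hp2)]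

lemma colour_cross_self (x : ZMod p) : colour (x, false) (x, true) = (x, false) := by
  simp [colour]

lemma colour_cross {x y j : ZMod p} (h : y - x = j) (hj : j ≠ 0) :
    colour (x, false) (y, true) = (j, true) := by
  rw [colour, if_neg (fun hxy => hj (by rw [← h, hxy, sub_self])), h]

lemma injOn_of_coeff (hp : Odd p) {n : ℕ} {c : ℕ → ℤ} {side : ℕ → Bool} (x d : ZMod p)
    (hd : d ≠ 0) (hc : ∀ s ≤ n, ∀ t ≤ n, side s = side t →
      Even (c s - c t) ∧ |c s - c t| < 2 * p ∧ (c s = c t → s = t)) :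
    Set.InjOn (fun t => (x + c t * d, side t)) (Set.Iic n) := by
  intro s hs t ht h
  obtain ⟨h₁, h₂⟩ := Prod.mk.inj h
  obtain ⟨heven, hlt, hinj⟩ := hc s hs t ht h₂
  exact hinj (ZMod.eq_of_intCast_eq_of_even_sub hp (mul_right_cancel₀ hd (add_left_cancel h₁))
    heven hlt)

/-- Alternating the colours `(j, true)` and `(k, true)` from `(0, false)`. -/
def cycleGG (j k : ZMod p) (t : ℕ) : ZMod p × Bool :=
  if t % 2 = 0 then ((t / 2 : ℕ) * (j - k), false) else ((t / 2 : ℕ) * (j - k) + j, true)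

lemma cycleGG_even (j k : ZMod p) (m : ℕ) : cycleGG j k (2 * m) = (m * (j - k), false) := by
  simp [cycleGG]

lemma cycleGG_odd (j k : ZMod p) (m : ℕ) :
    cycleGG j k (2 * m + 1) = (m * (j - k) + j, true) := by
  simp [cycleGG, show (2 * m + 1) / 2 = m by omega]

lemma isCycleSeq_cycleGG {j k : ZMod p} (hj : j ≠ 0) (hk : k ≠ 0) (hjk : j ≠ k) :
    IsCycleSeq (fun u v => colour u v = (j, true) ∨ colour u v = (k, true))
      (2 * p - 1) (cycleGG j k) := by
  have hjk' : j - k ≠ 0 := sub_ne_zero.2 hjk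
  refine ⟨fun s hs t ht h => ?_, fun t _ => ?_, ?_⟩
  · have hp := (Fact.out : p.Prime).pos
    simp only [Set.mem_Iic] at hs ht
    obtain ⟨m, rfl | rfl⟩ := Nat.even_or_odd' s <;> obtain ⟨n, rfl | rfl⟩ := Nat.even_or_odd' t <;>
      simp only [cycleGG_even, cycleGG_odd, Prod.mk.injEq, add_left_inj, mul_left_inj' hjk',
        ZMod.natCast_eq_natCast_iff', Bool.false_eq_true, Bool.true_eq_false, and_true,
        and_false] at h <;>
      rw [Nat.mod_eq_of_lt (by omega), Nat.mod_eq_of_lt (by omega)] at h <;> omega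
  · obtain ⟨m, rfl | rfl⟩ := Nat.even_or_odd' t
    · left
      rw [cycleGG_even, cycleGG_odd, colour_cross (by ring) hj]
    · right
      rw [cycleGG_odd, show 2 * m + 1 + 1 = 2 * (m + 1) by ring, cycleGG_even, colour_comm,
        colour_cross (by push_cast; ring) hk]
  · right
    have h2p : 2 * p - 1 = 2 * (p - 1) + 1 := by have := (Fact.out : p.Prime).two_le; omega
    rw [h2p, cycleGG_odd, show 0 = 2 * 0 by rfl, cycleGG_even, colour_comm,
      colour_cross (by rw [ZMod.natCast_pred]; ring) hk]

def ffCoeff (m : ℕ) : ℤ := if m % 2 = 0 then -m else m + 1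

/-- Alternating the colours `(i', false)` and `(i, false)` from `(i, ε)` visits `ffPoint i i' m`
at step `m`. -/
def ffPoint (i i' : ZMod p) (m : ℕ) : ZMod p := i + (ffCoeff m : ZMod p) * (i' - i)

/-- After `p - 1` steps along side `false` the path reaches `i'`, crosses to side `true` and
walks back. -/
def cycleFF (i i' : ZMod p) (t : ℕ) : ZMod p × Bool :=
  (ffPoint i i' (if t < p then t else 2 * p - 1 - t), p ≤ t)

lemma colour_ffPoint_succ (hp2 : p ≠ 2) (i i' : ZMod p) (ε : Bool) (m : ℕ) :
    colour (ffPoint i i' m, ε) (ffPoint i i' (m + 1), ε) = (i, false) ∨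
      colour (ffPoint i i' m, ε) (ffPoint i i' (m + 1), ε) = (i', false) := by
  have hsum : ffCoeff m + ffCoeff (m + 1) = if m % 2 = 0 then 2 else 0 := by
    unfold ffCoeff; split_ifs <;> omega
  have hcast := congrArg (fun z : ℤ => (z : ZMod p)) hsum
  split_ifs at hcast <;> push_cast at hcast
  · exact .inr (colour_same hp2 ε (by unfold ffPoint; linear_combination (i' - i) * hcast))
  · exact .inl (colour_same hp2 ε (by unfold ffPoint; linear_combination (i' - i) * hcast))

lemma ffPoint_pred (hp : Odd p) (i i' : ZMod p) : ffPoint i i' (p - 1) = i' := by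
  have hcoeff : ffCoeff (p - 1) = -((p - 1 : ℕ) : ℤ) := by
    rw [ffCoeff, if_pos (by have := Nat.odd_iff.1 hp; omega)]
  rw [ffPoint, hcoeff, Int.cast_neg, Int.cast_natCast, ZMod.natCast_pred]
  ring

lemma isCycleSeq_cycleFF (hp2 : p ≠ 2) {i i' : ZMod p} (hii' : i ≠ i') :
    IsCycleSeq (fun u v => colour u v = (i, false) ∨ colour u v = (i', false))
      (2 * p - 1) (cycleFF i i') := by
  have hp : Odd p := (Fact.out : p.Prime).odd_of_ne_two hp2
  have hp1 := hp.pos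
  refine ⟨injOn_of_coeff hp i (i' - i) (sub_ne_zero.2 hii'.symm) fun s hs t ht hst => ?_,
    fun t ht => ?_, ?_⟩
  · have := Nat.odd_iff.1 hp
    simp only [decide_eq_decide] at hst
    simp only [ffCoeff, Int.even_iff, abs_lt]
    refine ⟨?_, ⟨?_, ?_⟩, ?_⟩ <;> split_ifs <;> omega
  · rcases lt_trichotomy (t + 1) p with h | h | h
    · simpa [cycleFF, h, show t < p by omega, show ¬ p ≤ t by omega, show ¬ p ≤ t + 1 by omega]
        using colour_ffPoint_succ hp2 i i' false t
    · right
      rw [cycleFF, cycleFF, if_pos (by omega), if_neg (by omega),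
        show 2 * p - 1 - (t + 1) = t by omega]
      simp [show t = p - 1 by omega, show ¬ p ≤ p - 1 by omega, Nat.sub_add_cancel hp1,
        colour_cross_self, ffPoint_pred hp]
    · have := colour_ffPoint_succ hp2 i i' true (2 * p - 1 - (t + 1))
      rw [colour_comm, show 2 * p - 1 - (t + 1) + 1 = 2 * p - 1 - t by omega] at this
      simpa [cycleFF, show ¬ t < p by omega, show ¬ t + 1 < p by omega, show p ≤ t by omega,
        show p ≤ t + 1 by omega] using this
  · left
    simp only [cycleFF, if_neg (show ¬ 2 * p - 1 < p by omega), if_pos hp1, Nat.sub_self,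
      show p ≤ 2 * p - 1 by omega, (show ¬ p ≤ 0 by omega), decide_true, decide_false]
    rw [colour_comm, ffPoint, ffCoeff, if_pos rfl]
    simpa using colour_cross_self i

def fgCoeff (t : ℕ) : ℤ :=
  if t % 4 = 0 then -(2 * (t / 4 : ℕ)) else
  if t % 4 = 1 then -(2 * (t / 4 : ℕ) + 1) else
  if t % 4 = 2 then 2 * (t / 4 : ℕ) + 1 else 2 * (t / 4 : ℕ) + 2

lemma fgCoeff_succ (t : ℕ) : fgCoeff (t + 1) =
    if t % 4 = 0 then fgCoeff t - 1 else if t % 4 = 2 then fgCoeff t + 1 else -fgCoeff t := by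
  unfold fgCoeff; split_ifs <;> omega

/-- Alternating the colours `(j, true)` and `(i, false)` from `(i, true)`: the edges of colour
`(j, true)` shift the coordinate by `∓ j`, those of colour `(i, false)` reflect it in `i`. -/
def cycleFG (i j : ZMod p) (t : ℕ) : ZMod p × Bool :=
  (i + (fgCoeff t : ZMod p) * j, t % 4 = 0 ∨ t % 4 = 3)

lemma colour_cycleFG_succ (hp2 : p ≠ 2) (i : ZMod p) {j : ZMod p} (hj : j ≠ 0) (t : ℕ) :
    colour (cycleFG i j t) (cycleFG i j (t + 1)) = (i, false) ∨
      colour (cycleFG i j t) (cycleFG i j (t + 1)) = (j, true) := by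
  have hc := congrArg (fun z : ℤ => (z : ZMod p)) (fgCoeff_succ t)
  obtain h | h | h | h : t % 4 = 0 ∨ t % 4 = 1 ∨ t % 4 = 2 ∨ t % 4 = 3 := by omega
  all_goals simp only [cycleFG, Nat.add_mod t 1 4, h, Nat.reduceMod, Nat.reduceAdd,
    Nat.reduceEqDiff, ↓reduceIte, Int.cast_sub, Int.cast_add, Int.cast_neg, Int.cast_one, or_false,
    or_true, decide_true, decide_false] at hc ⊢
  · exact .inr (by rw [colour_comm, colour_cross (by rw [hc]; ring) hj])
  · exact .inl (colour_same hp2 false (by rw [hc]; ring))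
  · exact .inr (colour_cross (by rw [hc]; ring) hj)
  · exact .inl (colour_same hp2 true (by rw [hc]; ring))

lemma isCycleSeq_cycleFG (hp2 : p ≠ 2) (i : ZMod p) {j : ZMod p} (hj : j ≠ 0) :
    IsCycleSeq (fun u v => colour u v = (i, false) ∨ colour u v = (j, true))
      (2 * p - 1) (cycleFG i j) := by
  have hp : Odd p := (Fact.out : p.Prime).odd_of_ne_two hp2
  have hp4 := Nat.odd_iff.1 hp
  refine ⟨injOn_of_coeff hp i j hj fun s hs t ht hst => ?_,
    fun t _ => colour_cycleFG_succ hp2 i hj t, .inl ?_⟩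
  · simp only [decide_eq_decide] at hst
    simp only [fgCoeff, Int.even_iff, abs_lt]
    refine ⟨?_, ⟨?_, ?_⟩, ?_⟩ <;> split_ifs <;> omega
  · have hlast : fgCoeff (2 * p - 1) = -(p : ℕ) := by unfold fgCoeff; split_ifs <;> omega
    norm_num only [cycleFG, hlast, show fgCoeff 0 = 0 from rfl, show (2 * p - 1) % 4 = 1 by omega,
      Int.cast_neg, Int.cast_natCast, ZMod.natCast_self, neg_zero, zero_mul, add_zero, or_false,
      decide_true, decide_false]
    exact colour_cross_self i

lemma exists_isCycleSeq (hp2 : p ≠ 2) {a b : ZMod p × Bool} (ha : a ≠ apex p) (hb : b ≠ apex p)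
    (hab : a ≠ b) :
    ∃ f, IsCycleSeq (fun u v => colour u v = a ∨ colour u v = b) (2 * p - 1) f := by
  rcases a with ⟨x, _ | _⟩ <;> rcases b with ⟨y, _ | _⟩
  · exact ⟨_, isCycleSeq_cycleFF hp2 (by simpa using hab)⟩
  · exact ⟨_, isCycleSeq_cycleFG hp2 x (by simpa using hb)⟩
  · exact ⟨_, (isCycleSeq_cycleFG hp2 y (by simpa using ha)).mono fun _ _ => Or.symm⟩
  · exact ⟨_, isCycleSeq_cycleGG (by simpa using ha) (by simpa using hb) (by simpa using hab)⟩

variable (p) in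
/-- The vertices of `K₂ₚ₋₁` are those of `K₂ₚ` other than `apex p`; they also serve as the
colours. -/
noncomputable def equivFin : Fin (2 * p - 1) ≃ {w : ZMod p × Bool // w ≠ apex p} :=
  Fintype.equivOfCardEq (by
    rw [Fintype.card_fin, Fintype.card_subtype_compl, Fintype.card_prod, ZMod.card,
      Fintype.card_bool, Fintype.card_unique, mul_comm])

def colourSym (e : Sym2 (ZMod p × Bool)) : ZMod p × Bool := Sym2.lift ⟨colour, colour_comm⟩ e

lemma colourSym_ne_apex {e : Sym2 (ZMod p × Bool)} (he : ¬ e.IsDiag) : colourSym e ≠ apex p := by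
  induction e using Sym2.ind with
  | h u v => exact colour_ne_apex (by simpa using he)

variable (p) in
noncomputable def edgeColouring : (completeGraph (Fin (2 * p - 1))).edgeSet → Fin (2 * p - 1) :=
  fun e => (equivFin p).symm ⟨colourSym (e.1.map fun v => equivFin p v), colourSym_ne_apex
    ((Sym2.isDiag_map (Subtype.val_injective.comp (equivFin p).injective)).not.2
      (SimpleGraph.not_isDiag_of_mem_edgeSet _ e.2))⟩

lemma edgeColouring_mk {u v : Fin (2 * p - 1)} (h : (completeGraph _).Adj u v) :
    (equivFin p (edgeColouring p ⟨s(u, v), h⟩) : ZMod p × Bool) =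
      colour (equivFin p u) (equivFin p v) := by
  simp [edgeColouring, colourSym]

lemma isProperEdgeColoring_edgeColouring (hp2 : p ≠ 2) :
    IsProperEdgeColoring _ _ (edgeColouring p) := by
  rintro ⟨e₁, he₁⟩ ⟨e₂, he₂⟩ hne ⟨v, hv₁, hv₂⟩ hcol
  obtain ⟨u₁, rfl⟩ : ∃ u, s(v, u) = e₁ := ⟨_, Sym2.other_spec hv₁⟩
  obtain ⟨u₂, rfl⟩ : ∃ u, s(v, u) = e₂ := ⟨_, Sym2.other_spec hv₂⟩
  have hval : colour (equivFin p v : ZMod p × Bool) (equivFin p u₁) =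
      colour (equivFin p v : ZMod p × Bool) (equivFin p u₂) := by
    rw [← edgeColouring_mk he₁, ← edgeColouring_mk he₂, hcol]
  have hι : ∀ {u}, v ≠ u → (equivFin p v : ZMod p × Bool) ≠ equivFin p u := fun h hv =>
    h ((equivFin p).injective (Subtype.ext hv))
  have hu := colour_injective hp2 (hι he₁) (hι he₂) hval
  obtain rfl : u₁ = u₂ := (equivFin p).injective (Subtype.ext hu)
  exact hne rfl

lemma kempeGraph_adj_symm_equivFin {a b : Fin (2 * p - 1)} {y z : {w // w ≠ apex p}}
    (hyz : y ≠ z) (h : colour y z = (equivFin p a : ZMod p × Bool) ∨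
      colour y z = (equivFin p b : ZMod p × Bool)) :
    (kempeGraph _ (edgeColouring p) a b).Adj ((equivFin p).symm y) ((equivFin p).symm z) := by
  have hadj : (completeGraph _).Adj ((equivFin p).symm y) ((equivFin p).symm z) :=
    (equivFin p).symm.injective.ne hyz
  refine ⟨hadj, h.imp (fun hc => ?_) (fun hc => ?_)⟩ <;>
    exact (equivFin p).injective (Subtype.ext (by simpa [edgeColouring_mk] using hc))

lemma exists_isHamiltonian_kempeGraph (hp2 : p ≠ 2) {a b : Fin (2 * p - 1)} (hab : a ≠ b) :
    ∃ (u v : Fin (2 * p - 1)) (w : (kempeGraph _ (edgeColouring p) a b).Walk u v),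
      w.IsHamiltonian := by
  obtain ⟨f, hf⟩ := exists_isCycleSeq hp2 (equivFin p a).2 (equivFin p b).2
    (fun h => hab ((equivFin p).injective (Subtype.ext h)))
  have hcard : Fintype.card (ZMod p × Bool) = 2 * p - 1 + 1 := by
    have := (Fact.out : p.Prime).pos
    rw [Fintype.card_prod, ZMod.card, Fintype.card_bool]; omega
  obtain ⟨L, hnodup, hall, hchain⟩ := hf.exists_path hcard (apex p)
  have hne : L.map (equivFin p).symm ≠ [] :=
    (List.map_eq_nil_iff).not.2 (List.ne_nil_of_mem (hall (equivFin p a)))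
  have hchain' := List.isChain_map _ |>.2 <| hchain.imp fun y z ⟨hyz, h⟩ =>
    kempeGraph_adj_symm_equivFin (a := a) (b := b) hyz h
  set w := Walk.ofSupport _ hne hchain'
  have hpath : w.IsPath := by
    rw [Walk.isPath_def, Walk.support_ofSupport]
    exact hnodup.map (equivFin p).symm.injective
  exact ⟨_, _, w, hpath.isHamiltonian_of_mem fun x => by
    rw [Walk.support_ofSupport]
    exact List.mem_map.2 ⟨equivFin p x, hall _, by simp⟩⟩

end Kotzig

/-- **Proposition.** For every prime `p ≥ 3`, the complete graph `K_{2p-1}` has a proper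
`(2p-1)`-edge-colouring in which the union of any two colour classes forms a Hamiltonian
path; consequently there exist proper `(2p-1)`-edge-colourings of `K_{2p-1}` that are
not Kempe equivalent (even after identifying colourings differing by a permutation of
the colours), i.e. `κ_E(K_{2p-1}, 2p-1) > 1`. -/
theorem kappa_complete_odd_gt_one (p : ℕ) (hp : p.Prime) (hp3 : 3 ≤ p) :
    (∃ φ : (completeGraph (Fin (2 * p - 1))).edgeSet → Fin (2 * p - 1),
      IsProperEdgeColoring (completeGraph (Fin (2 * p - 1))) (2 * p - 1) φ ∧
      ∀ a b : Fin (2 * p - 1), a ≠ b →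
        ∃ (u v : Fin (2 * p - 1))
          (w : (completeGraph (Fin (2 * p - 1))).Walk u v),
          w.IsPath ∧ w.IsHamiltonian ∧
          ∀ e : (completeGraph (Fin (2 * p - 1))).edgeSet,
            (e : Sym2 (Fin (2 * p - 1))) ∈ w.edges ↔ (φ e = a ∨ φ e = b)) ∧
    (∃ φ ψ : (completeGraph (Fin (2 * p - 1))).edgeSet → Fin (2 * p - 1),
      IsProperEdgeColoring (completeGraph (Fin (2 * p - 1))) (2 * p - 1) φ ∧
      IsProperEdgeColoring (completeGraph (Fin (2 * p - 1))) (2 * p - 1) ψ ∧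
      ¬ KempePermEquiv (completeGraph (Fin (2 * p - 1))) (2 * p - 1) φ ψ) := by
  have := Fact.mk hp
  have hp2 : p ≠ 2 := by omega
  have hφ := Kotzig.isProperEdgeColoring_edgeColouring hp2
  have hham := fun a b (hab : a ≠ b) => Kotzig.exists_isHamiltonian_kempeGraph hp2 hab
  have hconn : KempeConnected _ (Kotzig.edgeColouring p) := fun a b hab =>
    let ⟨_, _, _, hw⟩ := hham a b hab; hw.preconnected
  have hchoose : 2 * p - 1 < (2 * p - 1).choose 2 := by
    rw [Nat.choose_two_right, show 2 * p - 1 - 1 = (p - 1) * 2 by omega, ← mul_assoc,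
      Nat.mul_div_cancel _ two_pos]
    exact lt_mul_of_one_lt_right (by omega) (by omega)
  obtain ⟨ψ, hψ, hφψ⟩ :=
    hφ.exists_not_permRelated (by rw [Fintype.card_fin]; omega) (by simpa using hchoose)
  refine ⟨⟨_, hφ, fun a b hab => ?_⟩, _, ψ, hφ, hψ, hconn.not_kempePermEquiv hφψ⟩
  obtain ⟨u, v, w, hw⟩ := hham a b hab
  exact hφ.exists_isHamiltonian_edges_iff (by rw [Fintype.card_fin]; exact ⟨p - 1, by omega⟩) hw
end

section
/- For every prime n = p, the complete graph K_{2p} can be decomposed into 2p − 1 perfect matchings such that the union of any two of these matchings forms a Hamiltonian cycle of K_{2p}. -/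
open SimpleGraph

/-- A set of edges of `G` is a matching if its edges are pairwise non-adjacent
(no two distinct edges share a vertex). -/
def IsMatchingSet {V : Type*} (G : SimpleGraph V) (M : Set (Sym2 V)) : Prop :=
  M ⊆ G.edgeSet ∧
    ∀ e₁ ∈ M, ∀ e₂ ∈ M, e₁ ≠ e₂ → ∀ v : V, v ∈ e₁ → v ∉ e₂

/-- A vertex is covered by a set of edges if it is an endpoint of one of them. -/
def CoveredBy {V : Type*} (M : Set (Sym2 V)) (v : V) : Prop :=
  ∃ e ∈ M, v ∈ e

/-- `M` is a maximum matching of `G`: a matching of largest possible size. -/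
def IsMaximumMatching {V : Type*} (G : SimpleGraph V) (M : Set (Sym2 V)) : Prop :=
  IsMatchingSet G M ∧ ∀ M' : Set (Sym2 V), IsMatchingSet G M' → M'.ncard ≤ M.ncard

/-- A perfect matching of `G` as a set of edges: a matching covering every vertex. -/
def IsPerfectMatchingSet {V : Type*} (G : SimpleGraph V) (M : Set (Sym2 V)) : Prop :=
  IsMatchingSet G M ∧ ∀ v : V, CoveredBy M v

/-! A perfect matching is encoded by a fixed-point-free involution `σ`, with edges `{v, σ v}`.
Two such involutions that disagree everywhere form a 2-regular graph, which is a Hamiltonian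
cycle as soon as it is connected. For odd `p` take the vertex set `ℤ_p × {0, 1}` and Kotzig's
matchings: `F_i` pairs `x` with `2i - x` inside each copy of `ℤ_p` and joins the two copies of
`i`, while `G_d` (`d ≠ 0`) joins `(x, 0)` to `(x + d, 1)`. Walking alternately along two of them
translates a copy of `ℤ_p` by `2(j - i)`, `2d` or `d - e`, which generates `ℤ_p` because `p` is
an odd prime, so every union is connected. For `p = 2` the three nonzero translations of
`ℤ_2 × ℤ_2` factorize `K_4` in the same way. -/

open Function

section OneFactorization

variable {V V' ι ι' : Type*}

def IsPerfectOneFactorization [DecidableEq V] (G : SimpleGraph V) (M : ι → Set (Sym2 V)) :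
    Prop :=
  (∀ i, IsPerfectMatchingSet G (M i)) ∧
    (∀ i j, i ≠ j → Disjoint (M i) (M j)) ∧
    (⋃ i, M i) = G.edgeSet ∧
    ∀ i j, i ≠ j → ∃ (u : V) (w : G.Walk u u),
      w.IsHamiltonianCycle ∧ ∀ e : Sym2 V, e ∈ w.edges ↔ e ∈ M i ∪ M j

variable {G : SimpleGraph V} {G' : SimpleGraph V'}

lemma IsPerfectMatchingSet.map (f : G ≃g G') {M : Set (Sym2 V)}
    (h : IsPerfectMatchingSet G M) : IsPerfectMatchingSet G' (Sym2.map f '' M) := by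
  obtain ⟨⟨hsub, hdisj⟩, hcov⟩ := h
  refine ⟨⟨?_, ?_⟩, fun v ↦ ?_⟩
  · rintro _ ⟨e, he, rfl⟩
    exact f.map_mem_edgeSet_iff.mpr (hsub he)
  · rintro _ ⟨e₁, he₁, rfl⟩ _ ⟨e₂, he₂, rfl⟩ hne v hv₁ hv₂
    rw [Sym2.mem_map] at hv₁ hv₂
    obtain ⟨a, ha, rfl⟩ := hv₁
    obtain ⟨b, hb, hab⟩ := hv₂
    obtain rfl := f.injective hab
    exact hdisj e₁ he₁ e₂ he₂ (ne_of_apply_ne _ hne) _ ha hb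
  · obtain ⟨e, he, hv⟩ := hcov (f.symm v)
    exact ⟨Sym2.map f e, ⟨e, he, rfl⟩, Sym2.mem_map.mpr ⟨_, hv, f.apply_symm_apply v⟩⟩

lemma IsPerfectOneFactorization.map [DecidableEq V] [DecidableEq V'] (f : G ≃g G')
    (g : ι ≃ ι') {M : ι → Set (Sym2 V)} (h : IsPerfectOneFactorization G M) :
    IsPerfectOneFactorization G' fun i ↦ Sym2.map f '' M (g.symm i) := by
  obtain ⟨hperf, hdisj, hunion, hham⟩ := h
  have hinj : Injective (Sym2.map f) := Sym2.map.injective f.injective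
  refine ⟨fun i ↦ (hperf _).map f, fun i j hij ↦ ?_, ?_, fun i j hij ↦ ?_⟩
  · exact Set.disjoint_image_of_injective hinj (hdisj _ _ (g.symm.injective.ne hij))
  · rw [← Set.image_iUnion, g.symm.surjective.iUnion_comp (fun i ↦ M i), hunion]
    ext e
    induction e using Sym2.ind with
    | _ a b =>
      rw [← f.apply_symm_apply a, ← f.apply_symm_apply b, ← Sym2.map_mk,
        hinj.mem_set_image, f.map_mem_edgeSet_iff]
  · obtain ⟨u, w, hw, hedges⟩ := hham _ _ (g.symm.injective.ne hij)
    refine ⟨f u, w.map f.toHom, hw.map f.bijective, fun e ↦ ?_⟩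
    rw [Walk.edges_map, ← Set.image_union, List.mem_map]
    simp only [hedges, Set.mem_image]
    rfl

lemma IsPerfectOneFactorization.exists_fin [Fintype V] [DecidableEq V] [Fintype ι] {n k : ℕ}
    (hV : Fintype.card V = n) (hι : Fintype.card ι = k) {M : ι → Set (Sym2 V)}
    (h : IsPerfectOneFactorization (completeGraph V) M) :
    ∃ M' : Fin k → Set (Sym2 (Fin n)), IsPerfectOneFactorization (completeGraph (Fin n)) M' :=
  ⟨_, h.map (Iso.completeGraph (Fintype.equivFinOfCardEq hV)) (Fintype.equivFinOfCardEq hι)⟩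

end OneFactorization

namespace SimpleGraph

variable {V : Type*} {G : SimpleGraph V}

lemma Walk.IsCycle.isHamiltonianCycle_of_forall_mem_support [DecidableEq V] {u : V}
    {c : G.Walk u u} (hc : c.IsCycle) (hsupp : ∀ v, v ∈ c.support) : c.IsHamiltonianCycle := by
  rw [Walk.isHamiltonianCycle_iff_isCycle_and_support_count_tail_eq_one]
  refine ⟨hc, fun v ↦ List.count_eq_one_of_mem hc.support_nodup ?_⟩
  rcases c.mem_support_iff.mp (hsupp v) with rfl | hv
  · exact Walk.end_mem_tail_support hc.not_nil
  · exact hv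

lemma Connected.exists_isHamiltonianCycle_of_isCycles [Finite V] [DecidableEq V]
    (hG : G.Connected) (hcyc : G.IsCycles) {v w : V} (hvw : G.Adj v w) :
    ∃ (u : V) (c : G.Walk u u),
      c.IsHamiltonianCycle ∧ ∀ e, e ∈ c.edges ↔ e ∈ G.edgeSet := by
  classical
  have := Fintype.ofFinite V
  obtain ⟨c, hc, hverts⟩ := hcyc.exists_cycle_toSubgraph_verts_eq_connectedComponentSupp
    (c := G.connectedComponentMk v) rfl ⟨w, hvw⟩
  have hmem : ∀ x, x ∈ c.toSubgraph.verts := fun x ↦ by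
    rw [hverts, ConnectedComponent.mem_supp_iff, ConnectedComponent.eq]
    exact hG.preconnected x v
  refine ⟨v, c, hc.isHamiltonianCycle_of_forall_mem_support
    fun x ↦ c.mem_verts_toSubgraph.mp (hmem x), fun e ↦ ?_⟩
  induction e using Sym2.ind with
  | _ a b =>
    rw [← Walk.mem_edges_toSubgraph, Subgraph.mem_edgeSet, mem_edgeSet]
    exact hc.adj_toSubgraph_iff_of_isCycles hcyc (hmem a) b

end SimpleGraph

section InvolutionMatching

variable {V ι : Type*} {σ τ : V → V}

def involutionMatching (σ : V → V) : Set (Sym2 V) :=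
  Set.range fun v ↦ s(v, σ v)

lemma mk_mem_involutionMatching_iff (hσ : Involutive σ) {v w : V} :
    s(v, w) ∈ involutionMatching σ ↔ w = σ v := by
  constructor
  · rintro ⟨u, hu⟩
    rcases Sym2.eq_iff.mp hu with ⟨rfl, rfl⟩ | ⟨rfl, rfl⟩
    · rfl
    · exact (hσ u).symm
  · rintro rfl
    exact ⟨v, rfl⟩

lemma eq_mk_of_mem_involutionMatching (hσ : Involutive σ) {e : Sym2 V}
    (he : e ∈ involutionMatching σ) {v : V} (hv : v ∈ e) : e = s(v, σ v) := by
  obtain ⟨u, rfl⟩ := he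
  rcases Sym2.mem_iff.mp hv with rfl | rfl
  · rfl
  · rw [hσ u, Sym2.eq_swap]

lemma isPerfectMatchingSet_involutionMatching (hσ : Involutive σ) (hfix : ∀ v, σ v ≠ v) :
    IsPerfectMatchingSet (completeGraph V) (involutionMatching σ) := by
  refine ⟨⟨?_, fun e₁ he₁ e₂ he₂ hne v hv₁ hv₂ ↦ hne ?_⟩,
    fun v ↦ ⟨_, ⟨v, rfl⟩, Sym2.mem_mk_left _ _⟩⟩
  · rintro _ ⟨v, rfl⟩
    exact (hfix v).symm
  · rw [eq_mk_of_mem_involutionMatching hσ he₁ hv₁,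
      eq_mk_of_mem_involutionMatching hσ he₂ hv₂]

lemma disjoint_involutionMatching (hτ : Involutive τ) (hne : ∀ v, σ v ≠ τ v) :
    Disjoint (involutionMatching σ) (involutionMatching τ) := by
  rw [Set.disjoint_left]
  rintro _ ⟨v, rfl⟩ h
  exact hne v ((mk_mem_involutionMatching_iff hτ).mp h)

def involutionGraph (σ τ : V → V) : SimpleGraph V :=
  fromEdgeSet (involutionMatching σ ∪ involutionMatching τ)

lemma involutionGraph_adj {v w : V} :
    (involutionGraph σ τ).Adj v w ↔
      s(v, w) ∈ involutionMatching σ ∪ involutionMatching τ ∧ v ≠ w :=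
  fromEdgeSet_adj _

lemma involutionGraph_comm : involutionGraph σ τ = involutionGraph τ σ := by
  rw [involutionGraph, involutionGraph, Set.union_comm]

lemma involutionGraph_reachable_left (v : V) : (involutionGraph σ τ).Reachable v (σ v) := by
  by_cases h : v = σ v
  · rw [← h]
  · exact (involutionGraph_adj.mpr ⟨Or.inl ⟨v, rfl⟩, h⟩).reachable

lemma involutionGraph_reachable_right (v : V) : (involutionGraph σ τ).Reachable v (τ v) :=
  involutionGraph_comm (σ := τ) ▸ involutionGraph_reachable_left v

lemma edgeSet_involutionGraph (hσ : ∀ v, σ v ≠ v) (hτ : ∀ v, τ v ≠ v) :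
    (involutionGraph σ τ).edgeSet = involutionMatching σ ∪ involutionMatching τ := by
  rw [involutionGraph, edgeSet_fromEdgeSet, sdiff_eq_left, Set.disjoint_left]
  rintro _ (⟨v, rfl⟩ | ⟨v, rfl⟩) hdiag
  · exact hσ v (Sym2.mk_isDiag_iff.mp hdiag).symm
  · exact hτ v (Sym2.mk_isDiag_iff.mp hdiag).symm

lemma isCycles_involutionGraph (hσ : Involutive σ) (hτ : Involutive τ)
    (hσfix : ∀ v, σ v ≠ v) (hτfix : ∀ v, τ v ≠ v) (hne : ∀ v, σ v ≠ τ v) :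
    (involutionGraph σ τ).IsCycles := by
  intro v _
  have hnbr : (involutionGraph σ τ).neighborSet v = {σ v, τ v} := by
    ext w
    simp only [mem_neighborSet, involutionGraph_adj, Set.mem_union,
      mk_mem_involutionMatching_iff hσ, mk_mem_involutionMatching_iff hτ, Set.mem_insert_iff,
      Set.mem_singleton_iff]
    constructor
    · exact fun h ↦ h.1
    · rintro (rfl | rfl)
      exacts [⟨Or.inl rfl, (hσfix v).symm⟩, ⟨Or.inr rfl, (hτfix v).symm⟩]
  rw [hnbr, Set.ncard_pair (hne v)]

theorem isPerfectOneFactorization_involutionMatching [Finite V] [DecidableEq V]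
    (σ : ι → V → V) (hinv : ∀ i, Involutive (σ i)) (hfix : ∀ i v, σ i v ≠ v)
    (hne : ∀ i j, i ≠ j → ∀ v, σ i v ≠ σ j v)
    (hcover : ∀ u v, u ≠ v → ∃ i, σ i u = v)
    (hconn : ∀ i j, i ≠ j → (involutionGraph (σ i) (σ j)).Connected) :
    IsPerfectOneFactorization (completeGraph V) fun i ↦ involutionMatching (σ i) := by
  refine ⟨fun i ↦ isPerfectMatchingSet_involutionMatching (hinv i) (hfix i),
    fun i j hij ↦ disjoint_involutionMatching (hinv j) (hne i j hij), ?_, fun i j hij ↦ ?_⟩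
  · ext e
    induction e using Sym2.ind with
    | _ u v =>
      simp only [Set.mem_iUnion, mk_mem_involutionMatching_iff (hinv _), mem_edgeSet,
        completeGraph, top_adj]
      constructor
      · rintro ⟨i, rfl⟩
        exact (hfix i u).symm
      · intro huv
        obtain ⟨i, rfl⟩ := hcover u v huv
        exact ⟨i, rfl⟩
  · obtain ⟨v⟩ := (hconn i j hij).nonempty
    obtain ⟨u, c, hc, hedges⟩ := (hconn i j hij).exists_isHamiltonianCycle_of_isCycles
      (isCycles_involutionGraph (hinv i) (hinv j) (hfix i) (hfix j) (hne i j hij))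
      (v := v) (w := σ i v) (involutionGraph_adj.mpr ⟨Or.inl ⟨v, rfl⟩, (hfix i v).symm⟩)
    refine ⟨u, c.mapLe le_top, hc.map bijective_id, fun e ↦ ?_⟩
    rw [Walk.edges_mapLe_eq_edges, hedges, edgeSet_involutionGraph (hfix i) (hfix j)]

end InvolutionMatching

lemma ZMod.add_induction {p : ℕ} [Fact p.Prime] {t : ZMod p} (ht : t ≠ 0)
    {P : ZMod p → Prop} {x₀ : ZMod p} (h₀ : P x₀) (hstep : ∀ x, P x → P (x + t))
    (y : ZMod p) : P y := by
  have hmul : ∀ n : ℕ, P (x₀ + n * t) := by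
    intro n
    induction n with
    | zero => simpa using h₀
    | succ n ih => simpa [add_mul, ← add_assoc] using hstep _ ih
  simpa [ZMod.natCast_zmod_val, div_mul_cancel₀ _ ht] using hmul ((y - x₀) / t).val

namespace Kotzig

variable {p : ℕ}

/- Vertices are two copies `ZMod p × Bool` of `ℤ_p`; `reflect i` is the matching `F_i`
and `cross d` the matching `G_d`. -/
def reflect (i : ZMod p) (v : ZMod p × Bool) : ZMod p × Bool :=
  if v.1 = i then (i, !v.2) else (2 * i - v.1, v.2)

def cross (d : ZMod p) (v : ZMod p × Bool) : ZMod p × Bool :=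
  if v.2 then (v.1 - d, false) else (v.1 + d, true)

def involution : ZMod p ⊕ (ZMod p)ˣ → ZMod p × Bool → ZMod p × Bool
  | .inl i => reflect i
  | .inr d => cross d

lemma reflect_involutive (i : ZMod p) : Involutive (reflect i) := by
  rintro ⟨x, b⟩
  by_cases hx : x = i
  · simp [reflect, hx]
  · have : 2 * i - x ≠ i := fun h ↦ hx (by linear_combination -h)
    simp [reflect, hx, this]

lemma cross_involutive (d : ZMod p) : Involutive (cross d) := by
  rintro ⟨x, _ | _⟩ <;> simp [cross]

lemma cross_ne_self (d : ZMod p) (v : ZMod p × Bool) : cross d v ≠ v := by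
  obtain ⟨x, _ | _⟩ := v <;> simp [cross]

lemma reflect_ne_self [Fact p.Prime] (h2 : (2 : ZMod p) ≠ 0) (i : ZMod p)
    (v : ZMod p × Bool) : reflect i v ≠ v := by
  obtain ⟨x, b⟩ := v
  unfold reflect
  split_ifs with hx
  · simp
  · simp only [ne_eq, Prod.mk.injEq, and_true]
    intro h
    have : 2 * (i - x) = 0 := by linear_combination h
    exact hx (sub_eq_zero.mp ((mul_eq_zero.mp this).resolve_left h2)).symm

lemma reflect_ne_reflect [Fact p.Prime] (h2 : (2 : ZMod p) ≠ 0) {i j : ZMod p} (hij : i ≠ j)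
    (v : ZMod p × Bool) : reflect i v ≠ reflect j v := by
  obtain ⟨x, b⟩ := v
  unfold reflect
  split_ifs with hi hj hj
  · exact absurd (hi.symm.trans hj) hij
  · simp
  · simp
  · simp only [ne_eq, Prod.mk.injEq, and_true]
    intro h
    have : 2 * (i - j) = 0 := by linear_combination h
    exact hij (sub_eq_zero.mp ((mul_eq_zero.mp this).resolve_left h2))

lemma reflect_ne_cross {d : ZMod p} (hd : d ≠ 0) (i : ZMod p) (v : ZMod p × Bool) :
    reflect i v ≠ cross d v := by
  obtain ⟨x, _ | _⟩ := v <;> by_cases hx : x = i <;>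
    simp [reflect, cross, hx, hd, eq_sub_iff_add_eq]

lemma cross_ne_cross {d e : ZMod p} (hde : d ≠ e) (v : ZMod p × Bool) :
    cross d v ≠ cross e v := by
  obtain ⟨x, _ | _⟩ := v <;> simp [cross, hde]

lemma exists_involution_apply_eq [Fact p.Prime] (h2 : (2 : ZMod p) ≠ 0)
    {u v : ZMod p × Bool} (huv : u ≠ v) : ∃ k, involution k u = v := by
  obtain ⟨x, b⟩ := u
  obtain ⟨y, c⟩ := v
  by_cases hxy : x = y
  · subst hxy
    have hbc : c = !b := by cases b <;> cases c <;> simp_all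
    exact ⟨.inl x, by simp [involution, reflect, hbc]⟩
  obtain rfl | hbc := eq_or_ne b c
  · have hx : x ≠ (x + y) / 2 := fun h ↦ hxy (by field_simp at h; linear_combination h)
    refine ⟨.inl ((x + y) / 2), ?_⟩
    simp only [involution, reflect, if_neg hx, Prod.mk.injEq, and_true]
    field_simp
    ring
  · cases b <;> cases c <;> simp only [ne_eq, not_true_eq_false] at hbc
    · exact ⟨.inr (.mk0 (y - x) (sub_ne_zero.mpr (Ne.symm hxy))), by simp [involution, cross]⟩
    · exact ⟨.inr (.mk0 (x - y) (sub_ne_zero.mpr hxy)), by simp [involution, cross]⟩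

variable {H : SimpleGraph (ZMod p × Bool)}

lemma reachable_reflect {i : ZMod p} (hH : ∀ v, H.Reachable v (reflect i v))
    (x : ZMod p) (b : Bool) : H.Reachable (x, b) (2 * i - x, b) := by
  by_cases hx : x = i
  · subst hx
    rw [two_mul, add_sub_cancel_right]
  · simpa [reflect, hx] using hH (x, b)

lemma connected_of_reachable_add [Fact p.Prime] {t : ZMod p} (ht : t ≠ 0)
    (hstep : ∀ x, H.Reachable (x, false) (x + t, false))
    (hcross : ∀ y, ∃ x, H.Reachable (x, false) (y, true)) : H.Connected := by
  have hfalse : ∀ y, H.Reachable (0, false) (y, false) :=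
    ZMod.add_induction ht (P := fun y ↦ H.Reachable (0, false) (y, false)) .rfl
      fun x hx ↦ hx.trans (hstep x)
  refine (connected_iff_exists_forall_reachable H).mpr ⟨(0, false), ?_⟩
  rintro ⟨y, _ | _⟩
  · exact hfalse y
  · obtain ⟨x, hx⟩ := hcross y
    exact (hfalse x).trans hx

lemma connected_reflect_reflect [Fact p.Prime] (h2 : (2 : ZMod p) ≠ 0) {i j : ZMod p}
    (hij : i ≠ j) : (involutionGraph (reflect i) (reflect j)).Connected := by
  set H := involutionGraph (reflect i) (reflect j)
  have hstep : ∀ x b, H.Reachable (x, b) (x + 2 * (j - i), b) := fun x b ↦ by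
    rw [show x + 2 * (j - i) = 2 * j - (2 * i - x) by ring]
    exact (reachable_reflect involutionGraph_reachable_left x b).trans
      (reachable_reflect involutionGraph_reachable_right _ b)
  have ht : 2 * (j - i) ≠ 0 := mul_ne_zero h2 (sub_ne_zero.mpr hij.symm)
  refine connected_of_reachable_add ht (hstep · false) fun y ↦ ⟨i, ?_⟩
  have hcross : H.Reachable (i, false) (i, true) := by
    simpa [reflect] using
      involutionGraph_reachable_left (σ := reflect i) (τ := reflect j) (i, false)
  exact hcross.trans <| ZMod.add_induction ht
    (P := fun y ↦ H.Reachable (i, true) (y, true)) .rfl (fun x hx ↦ hx.trans (hstep x true)) y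

lemma connected_reflect_cross [Fact p.Prime] (h2 : (2 : ZMod p) ≠ 0) (i : ZMod p)
    {d : ZMod p} (hd : d ≠ 0) : (involutionGraph (reflect i) (cross d)).Connected := by
  set H := involutionGraph (reflect i) (cross d)
  have hup : ∀ x, H.Reachable (x, false) (x + d, true) := fun x ↦
    involutionGraph_reachable_right (x, false)
  have hdown : ∀ x, H.Reachable (x, true) (x - d, false) := fun x ↦
    involutionGraph_reachable_right (x, true)
  refine connected_of_reachable_add (mul_ne_zero h2 hd) (fun x ↦ ?_)
    fun y ↦ ⟨y - d, (hdown y).symm⟩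
  rw [show x + 2 * d = 2 * i - (2 * i - (x + d) - d) by ring]
  exact (((hup x).trans (reachable_reflect involutionGraph_reachable_left _ _)).trans
    (hdown _)).trans (reachable_reflect involutionGraph_reachable_left _ _)

lemma connected_cross_cross [Fact p.Prime] {d e : ZMod p} (hde : d ≠ e) :
    (involutionGraph (cross d) (cross e)).Connected := by
  set H := involutionGraph (cross d) (cross e)
  have hup : ∀ x, H.Reachable (x, false) (x + d, true) := fun x ↦
    involutionGraph_reachable_left (x, false)
  have hdown : ∀ x, H.Reachable (x, true) (x - e, false) := fun x ↦
    involutionGraph_reachable_right (x, true)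
  refine connected_of_reachable_add (sub_ne_zero.mpr hde) (fun x ↦ ?_)
    fun y ↦ ⟨y - d, by simpa using hup (y - d)⟩
  rw [← add_sub_assoc]
  exact (hup x).trans (hdown _)

theorem isPerfectOneFactorization [Fact p.Prime] (h2 : (2 : ZMod p) ≠ 0) :
    IsPerfectOneFactorization (completeGraph (ZMod p × Bool))
      fun k ↦ involutionMatching (involution k) := by
  refine isPerfectOneFactorization_involutionMatching _ ?_ ?_ ?_
    (fun _ _ ↦ exists_involution_apply_eq h2) ?_
  · rintro (i | d)
    exacts [reflect_involutive i, cross_involutive (d : ZMod p)]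
  · rintro (i | d)
    exacts [reflect_ne_self h2 i, cross_ne_self (d : ZMod p)]
  · rintro (i | d) (j | e) hne
    · exact reflect_ne_reflect h2 (by simpa using hne)
    · exact reflect_ne_cross e.ne_zero i
    · exact fun v ↦ (reflect_ne_cross d.ne_zero j v).symm
    · exact cross_ne_cross (Units.val_injective.ne (by simpa using hne))
  · rintro (i | d) (j | e) hne
    · exact connected_reflect_reflect h2 (by simpa using hne)
    · exact connected_reflect_cross h2 i e.ne_zero
    · exact involutionGraph_comm ▸ connected_reflect_cross h2 j d.ne_zero
    · exact connected_cross_cross (Units.val_injective.ne (by simpa using hne))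

end Kotzig

theorem isPerfectOneFactorization_add_zmod_two_prod :
    IsPerfectOneFactorization (completeGraph (ZMod 2 × ZMod 2))
      fun v : {v : ZMod 2 × ZMod 2 // v ≠ 0} ↦ involutionMatching (· + v.1) := by
  refine isPerfectOneFactorization_involutionMatching _ (fun v x ↦ ?_) (fun v x ↦ ?_)
    (fun v w hvw x h ↦ hvw (Subtype.ext (add_left_cancel h)))
    (fun x y hxy ↦ ⟨⟨y - x, sub_ne_zero.mpr hxy.symm⟩, add_sub_cancel x y⟩)
    fun v w hvw ↦ ?_
  · rw [add_assoc, CharTwo.add_self_eq_zero, add_zero]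
  · simpa using v.2
  · have hspan : ∀ v w : ZMod 2 × ZMod 2, v ≠ 0 → w ≠ 0 → v ≠ w →
        ∀ y, y = 0 ∨ y = v ∨ y = w ∨ y = v + w := by decide
    refine (connected_iff_exists_forall_reachable _).mpr ⟨0, fun y ↦ ?_⟩
    have hv := involutionGraph_reachable_left (σ := (· + v.1)) (τ := (· + w.1)) 0
    have hw := involutionGraph_reachable_right (σ := (· + v.1)) (τ := (· + w.1)) 0
    have hvw' := involutionGraph_reachable_right (σ := (· + v.1)) (τ := (· + w.1)) v.1
    simp only [zero_add] at hv hw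
    rcases hspan v w v.2 w.2 (Subtype.val_injective.ne hvw) y with rfl | rfl | rfl | rfl
    exacts [.rfl, hv, hw, hv.trans hvw']

/-- **Theorem (Kotzig).** For every prime `p`, the complete graph `K_{2p}` can be
decomposed into `2p - 1` perfect matchings such that the union of any two of these
matchings forms a Hamiltonian cycle of `K_{2p}`. -/
theorem kotzig_perfect_one_factorization (p : ℕ) (hp : p.Prime) :
    ∃ M : Fin (2 * p - 1) → Set (Sym2 (Fin (2 * p))),
      (∀ i, IsPerfectMatchingSet (completeGraph (Fin (2 * p))) (M i)) ∧
      (∀ i j, i ≠ j → Disjoint (M i) (M j)) ∧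
      (⋃ i, M i) = (completeGraph (Fin (2 * p))).edgeSet ∧
      (∀ i j, i ≠ j →
        ∃ (u : Fin (2 * p)) (w : (completeGraph (Fin (2 * p))).Walk u u),
          w.IsHamiltonianCycle ∧
          ∀ e : Sym2 (Fin (2 * p)), e ∈ w.edges ↔ e ∈ M i ∪ M j) := by
  rcases eq_or_ne p 2 with rfl | hp2
  · exact isPerfectOneFactorization_add_zmod_two_prod.exists_fin rfl rfl
  have := Fact.mk hp
  have h2 : (2 : ZMod p) ≠ 0 := by
    rwa [← Nat.cast_ofNat, Ne, ZMod.natCast_eq_zero_iff,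
      Nat.prime_dvd_prime_iff_eq hp Nat.prime_two]
  refine (Kotzig.isPerfectOneFactorization h2).exists_fin ?_ ?_
  · simp [ZMod.card, mul_comm]
  · simp only [Fintype.card_sum, ZMod.card, ZMod.card_units]
    omega
end

section
/- Let G be a graph with maximum degree at most 4. Then there exists a maximum matching M of G such that every connected component of the graph G ∖ M (obtained from G by deleting the edges of M) contains a vertex v satisfying either (a) deg_{G∖M}(v) ≤ 2, or (b) deg_{G∖M}(v) = 3 and v has at most two neighbours of degree 4 in G ∖ M. Moreover, for any maximum matching M of G, no two vertices of degree 4 in G ∖ M are adjacent in G ∖ M. -/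
open SimpleGraph

/-!
The second claim: a vertex of degree 4 in `G ∖ M` is not covered by `M`, since `G` has maximum
degree 4, and an edge between two uncovered vertices could be added to `M`.

For the first claim, take a maximum matching `M` for which the fewest vertices lie in a component
of `G ∖ M` without a good vertex, and suppose there is such a bad component `C`. Every vertex of
`C` has degree 3 or 4, a vertex of degree 3 has only neighbours of degree 4, and vertices of
degree 4 are uncovered and have only neighbours of degree 3. Hence every degree-3 vertex `v` is
matched, and its partner `y` lies outside `C`: otherwise `v` and `y` have distinct uncovered
neighbours, an augmenting path of length 3. Counting edges between the degree-4 and the degree-3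
vertices of `C` verifies Hall's condition, so the degree-4 vertices `u` have distinct neighbours
`σ u`. Switching `M` along the alternating paths `u, σ u, y` gives a maximum matching in which
every vertex of `C` is covered and has degree 3, with at most one neighbour of degree 4 (its old
partner). Adjacency away from `C` and the vertices `y` does not change, so no new bad vertices
appear while those of `C` disappear.
-/

section Matching

variable {V : Type*} {G : SimpleGraph V} {M A R : Set (Sym2 V)} {e f : Sym2 V} {u v w y : V}

theorem IsMatchingSet.eq_of_mem_of_mem (hM : IsMatchingSet G M) (he : e ∈ M) (hf : f ∈ M)
    (hve : v ∈ e) (hvf : v ∈ f) : e = f :=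
  by_contra fun hne => hM.2 e he f hf hne v hve hvf

theorem IsMatchingSet.eq_of_mk_mem (hM : IsMatchingSet G M) (hw : s(v, w) ∈ M)
    (hy : s(v, y) ∈ M) : w = y :=
  Sym2.congr_right.1 (hM.eq_of_mem_of_mem hw hy (Sym2.mem_mk_left v w) (Sym2.mem_mk_left v y))

theorem coveredBy_iff : CoveredBy M v ↔ ∃ w, s(v, w) ∈ M := by
  constructor
  · rintro ⟨e, he, hv⟩
    obtain ⟨w, rfl⟩ := Sym2.mem_iff_exists.1 hv
    exact ⟨w, he⟩
  · rintro ⟨w, hw⟩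
    exact ⟨_, hw, Sym2.mem_mk_left v w⟩

theorem neighborSet_deleteEdges_of_mk_mem (hM : IsMatchingSet G M) (h : s(v, w) ∈ M) :
    (G.deleteEdges M).neighborSet v = G.neighborSet v \ {w} := by
  ext b
  simp only [mem_neighborSet, deleteEdges_adj, Set.mem_sdiff, Set.mem_singleton_iff]
  exact ⟨fun ⟨hb, hbM⟩ => ⟨hb, by rintro rfl; exact hbM h⟩,
    fun ⟨hb, hbw⟩ => ⟨hb, fun hbM => hbw (hM.eq_of_mk_mem hbM h)⟩⟩

theorem ncard_neighborSet_deleteEdges_of_coveredBy (hM : IsMatchingSet G M)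
    (h : CoveredBy M v) :
    ((G.deleteEdges M).neighborSet v).ncard = (G.neighborSet v).ncard - 1 := by
  obtain ⟨w, hw⟩ := coveredBy_iff.1 h
  rw [neighborSet_deleteEdges_of_mk_mem hM hw]
  exact Set.ncard_sdiff_singleton_of_mem (hM.1 hw)

theorem IsMatchingSet.sdiff_union (hM : IsMatchingSet G M) (hA : IsMatchingSet G A)
    (hAR : ∀ e ∈ A, ∀ f ∈ M, ∀ v ∈ e, v ∈ f → f ∈ R) : IsMatchingSet G (M \ R ∪ A) := by
  refine ⟨Set.union_subset (Set.sdiff_subset.trans hM.1) hA.1, ?_⟩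
  rintro e₁ (⟨h₁, h₁R⟩ | h₁) e₂ (⟨h₂, h₂R⟩ | h₂) hne v hv₁ hv₂
  · exact hM.2 e₁ h₁ e₂ h₂ hne v hv₁ hv₂
  · exact h₁R (hAR e₂ h₂ e₁ h₁ v hv₂ hv₁)
  · exact h₂R (hAR e₁ h₁ e₂ h₂ v hv₁ hv₂)
  · exact hA.2 e₁ h₁ e₂ h₂ hne v hv₁ hv₂

theorem not_coveredBy_of_ncard_eq_four (hΔ : (G.neighborSet v).ncard ≤ 4)
    (hM : IsMatchingSet G M) (h4 : ((G.deleteEdges M).neighborSet v).ncard = 4) :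
    ¬ CoveredBy M v := fun hv => by
  rw [ncard_neighborSet_deleteEdges_of_coveredBy hM hv] at h4
  omega

variable [Finite V]

theorem ncard_neighborSet_deleteEdges_le (v : V) :
    ((G.deleteEdges M).neighborSet v).ncard ≤ (G.neighborSet v).ncard :=
  Set.ncard_le_ncard fun _ hb => (deleteEdges_adj.1 hb).1

theorem IsMatchingSet.ncard_setOf_mk_mem_le_one (hM : IsMatchingSet G M) (v : V) :
    {w | s(v, w) ∈ M}.ncard ≤ 1 :=
  (Set.ncard_le_one).2 fun _ hw _ hy => hM.eq_of_mk_mem hw hy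

theorem ncard_sdiff_union_add_ncard (hRM : R ⊆ M)
    (hAR : ∀ e ∈ A, ∀ f ∈ M, ∀ v ∈ e, v ∈ f → f ∈ R) :
    (M \ R ∪ A).ncard + R.ncard = M.ncard + A.ncard := by
  have hdisj : Disjoint (M \ R) A := by
    refine Set.disjoint_left.2 fun e ⟨heM, heR⟩ heA => ?_
    induction e using Sym2.ind with
    | _ x y => exact heR (hAR _ heA _ heM x (Sym2.mem_mk_left x y) (Sym2.mem_mk_left x y))
  rw [Set.ncard_union_eq hdisj, ← Set.ncard_sdiff_add_ncard_of_subset hRM]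
  ring

theorem exists_isMaximumMatching (G : SimpleGraph V) : ∃ M, IsMaximumMatching G M := by
  obtain ⟨M, hM, hmax⟩ := Set.exists_max_image {M | IsMatchingSet G M} Set.ncard
    (Set.toFinite _) ⟨∅, Set.empty_subset _, fun _ h => h.elim⟩
  exact ⟨M, hM, hmax⟩

theorem IsMaximumMatching.not_adj_of_not_coveredBy (hM : IsMaximumMatching G M)
    (hu : ¬ CoveredBy M u) (hw : ¬ CoveredBy M w) : ¬ G.Adj u w := by
  intro huw
  have hA : IsMatchingSet G {s(u, w)} :=
    ⟨Set.singleton_subset_iff.2 huw, fun e₁ h₁ e₂ h₂ hne => absurd (h₁.trans h₂.symm) hne⟩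
  have hAR : ∀ e ∈ ({s(u, w)} : Set (Sym2 V)), ∀ f ∈ M, ∀ v ∈ e, v ∈ f → f ∈ (∅ : Set _) := by
    rintro e rfl f hf v hv hvf
    rcases Sym2.mem_iff.1 hv with rfl | rfl
    exacts [hu ⟨f, hf, hvf⟩, hw ⟨f, hf, hvf⟩]
  have hcard := ncard_sdiff_union_add_ncard (Set.empty_subset M) hAR
  have hle := hM.2 _ (hM.1.sdiff_union hA hAR)
  simp only [Set.ncard_empty, Set.ncard_singleton] at hcard
  omega

end Matching

theorem Finset.exists_injective_of_le_card_of_ncard_le {ι α : Type*} [Finite ι] [DecidableEq α]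
    (t : ι → Finset α) {k : ℕ} (hk : 0 < k) (ht : ∀ i, k ≤ (t i).card)
    (hα : ∀ x, {i | x ∈ t i}.ncard ≤ k) :
    ∃ f : ι → α, Function.Injective f ∧ ∀ i, f i ∈ t i := by
  refine (Finset.all_card_le_biUnion_card_iff_exists_injective t).1 fun s => ?_
  have hdc := Finset.card_mul_le_card_mul (fun i x => x ∈ t i) (s := s) (t := s.biUnion t)
    (m := k) (n := k) (fun i hi => ?_) (fun x _ => ?_)
  · exact Nat.le_of_mul_le_mul_right hdc hk
  · exact (ht i).trans (Finset.card_le_card fun x hx =>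
      (Finset.mem_bipartiteAbove _).2 ⟨Finset.mem_biUnion.2 ⟨i, hi, hx⟩, hx⟩)
  · rw [← Set.ncard_coe_finset]
    exact (Set.ncard_le_ncard fun i hi => (Finset.mem_bipartiteBelow _).1 hi |>.2).trans (hα x)

namespace SimpleGraph

variable {V : Type*}

theorem exists_injective_adj_of_ncard_neighborSet_le [Finite V] (H : SimpleGraph V) {k : ℕ}
    (hk : 0 < k) (hH : ∀ v, (H.neighborSet v).ncard ≤ k) {s : Set V}
    (hs : ∀ v ∈ s, (H.neighborSet v).ncard = k) :
    ∃ σ : s → V, Function.Injective σ ∧ ∀ v : s, H.Adj v (σ v) := by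
  classical
  have := Fintype.ofFinite V
  obtain ⟨σ, hσ, hadj⟩ := Finset.exists_injective_of_le_card_of_ncard_le
    (fun v : s => (H.neighborSet v).toFinset) hk
    (fun v => by rw [← Set.ncard_eq_toFinset_card', hs v v.2])
    (fun x => (Set.ncard_le_ncard_of_injOn Subtype.val
      (fun v hv => (H.mem_neighborSet _ _).2 (Set.mem_toFinset.1 hv).symm)
      Subtype.val_injective.injOn).trans (hH x))
  exact ⟨σ, hσ, fun v => Set.mem_toFinset.1 (hadj v)⟩

variable (H : SimpleGraph V)

def IsGoodVertex (v : V) : Prop :=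
  (H.neighborSet v).ncard ≤ 2 ∨
    ((H.neighborSet v).ncard = 3 ∧ {u | H.Adj v u ∧ (H.neighborSet u).ncard = 4}.ncard ≤ 2)

def badVertices : Set V := {v | ∀ w, H.Reachable v w → ¬ H.IsGoodVertex w}

variable {H} {H' : SimpleGraph V} {S : Set V} {v w : V}

theorem mem_badVertices_of_reachable (hv : v ∈ H.badVertices) (hvw : H.Reachable v w) :
    w ∈ H.badVertices :=
  fun x hwx => hv x (hvw.trans hwx)

theorem ncard_eq_four_of_adj_of_mem_badVertices [Finite V] (hv : v ∈ H.badVertices)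
    (h3 : (H.neighborSet v).ncard = 3) (hvw : H.Adj v w) : (H.neighborSet w).ncard = 4 := by
  have hgood := hv v .rfl
  simp only [IsGoodVertex, not_or, not_and, not_le] at hgood
  have hall : {u | H.Adj v u ∧ (H.neighborSet u).ncard = 4} = H.neighborSet v :=
    Set.eq_of_subset_of_ncard_le (fun u hu => hu.1) (by have := hgood.2 h3; omega)
  have hw : w ∈ {u | H.Adj v u ∧ (H.neighborSet u).ncard = 4} := hall ▸ hvw
  exact hw.2

theorem reachable_of_forall_adj_imp (h : ∀ a, H'.Reachable v a → ∀ b, H.Adj a b → H'.Adj a b)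
    (hvw : H.Reachable v w) : H'.Reachable v w := by
  have key : ∀ {x y}, H.Walk x y → H'.Reachable v x → H'.Reachable v y := by
    intro x y p
    induction p with
    | nil => exact id
    | cons hxy _ ih => exact fun hx => ih (hx.trans (h _ hx _ hxy).reachable)
  exact key hvw.some .rfl

theorem isGoodVertex_iff_of_adj_iff (hw : ∀ b, H.Adj w b ↔ H'.Adj w b)
    (hnbr : ∀ u, H.Adj w u → ∀ b, H.Adj u b ↔ H'.Adj u b) :
    H.IsGoodVertex w ↔ H'.IsGoodVertex w := by
  have hN : ∀ x, (∀ b, H.Adj x b ↔ H'.Adj x b) → H.neighborSet x = H'.neighborSet x :=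
    fun x h => Set.ext h
  have hdeg4 : {u | H.Adj w u ∧ (H.neighborSet u).ncard = 4} =
      {u | H'.Adj w u ∧ (H'.neighborSet u).ncard = 4} := by
    ext u
    constructor
    · rintro ⟨hu, h4⟩
      exact ⟨(hw u).1 hu, hN u (hnbr u hu) ▸ h4⟩
    · rintro ⟨hu, h4⟩
      exact ⟨(hw u).2 hu, hN u (hnbr u ((hw u).2 hu)) ▸ h4⟩
  rw [IsGoodVertex, IsGoodVertex, hN w hw, hdeg4]

theorem badVertices_ssubset_of_adj_iff (hadj : ∀ a ∉ S, ∀ b, H.Adj a b ↔ H'.Adj a b)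
    (hS : ∀ a ∈ S, ∃ w, H'.Reachable a w ∧ H'.IsGoodVertex w) (hvS : v ∈ S)
    (hv : v ∈ H.badVertices) : H'.badVertices ⊂ H.badVertices := by
  refine (Set.ssubset_iff_of_subset fun v hv w hvw hw => ?_).2
    ⟨v, hv, fun hv' => let ⟨w, hvw, hw⟩ := hS v hvS; hv' w hvw hw⟩
  have hout : ∀ a, H'.Reachable v a → a ∉ S := fun a hva haS =>
    let ⟨x, hax, hx⟩ := hS a haS
    hv x (hva.trans hax) hx
  have hvw' : H'.Reachable v w :=
    reachable_of_forall_adj_imp (fun a ha b => (hadj a (hout a ha) b).1) hvw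
  have hadjw := hadj w (hout w hvw')
  refine hv w hvw' ((isGoodVertex_iff_of_adj_iff hadjw fun u hu => ?_).1 hw)
  exact hadj u (hout u (hvw'.trans ((hadjw u).1 hu).reachable))

end SimpleGraph

section Switch

variable {V ι : Type*} {G : SimpleGraph V} {M : Set (Sym2 V)} {a b c : ι → V} {u v w y : V}

def matchingSwitch (M : Set (Sym2 V)) (a b c : ι → V) : Set (Sym2 V) :=
  M \ Set.range (fun i => s(b i, c i)) ∪ Set.range (fun i => s(a i, b i))

theorem mk_mem_matchingSwitch_iff (ha : ∀ i, a i ≠ u) (hb : ∀ i, b i ≠ u) (hc : ∀ i, c i ≠ u) :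
    s(u, w) ∈ matchingSwitch M a b c ↔ s(u, w) ∈ M := by
  have hR : s(u, w) ∉ Set.range (fun i => s(b i, c i)) := by
    rintro ⟨i, hi⟩
    rcases Sym2.mem_iff.1 (hi ▸ Sym2.mem_mk_left u w) with h | h
    exacts [hb i h.symm, hc i h.symm]
  have hA : s(u, w) ∉ Set.range (fun i => s(a i, b i)) := by
    rintro ⟨i, hi⟩
    rcases Sym2.mem_iff.1 (hi ▸ Sym2.mem_mk_left u w) with h | h
    exacts [ha i h.symm, hb i h.symm]
  simp only [matchingSwitch, Set.mem_union, Set.mem_sdiff, hR, hA, not_false_eq_true, and_true,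
    or_false]

theorem not_coveredBy_matchingSwitch (hM : IsMatchingSet G M) (ha : ∀ i, ¬ CoveredBy M (a i))
    (hbc : ∀ i, s(b i, c i) ∈ M) (hcb : ∀ i j, c i ≠ b j) (i : ι) :
    ¬ CoveredBy (matchingSwitch M a b c) (c i) := by
  rintro ⟨f, ⟨hfM, hfR⟩ | ⟨j, rfl⟩, hcf⟩
  · exact hfR ⟨i, hM.eq_of_mem_of_mem (hbc i) hfM (Sym2.mem_mk_right _ _) hcf⟩
  · rcases Sym2.mem_iff.1 hcf with h | h
    · exact ha j (h ▸ ⟨_, hbc i, Sym2.mem_mk_right _ _⟩)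
    · exact hcb i j h

theorem coveredBy_matchingSwitch (hv : CoveredBy M v ∨ v ∈ Set.range a) (hc : ∀ i, c i ≠ v) :
    CoveredBy (matchingSwitch M a b c) v := by
  by_cases hb : v ∈ Set.range b
  · obtain ⟨i, rfl⟩ := hb
    exact ⟨_, Or.inr ⟨i, rfl⟩, Sym2.mem_mk_right _ _⟩
  rcases hv with ⟨f, hf, hvf⟩ | ⟨i, rfl⟩
  · refine ⟨f, Or.inl ⟨hf, ?_⟩, hvf⟩
    rintro ⟨i, rfl⟩
    rcases Sym2.mem_iff.1 hvf with h | h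
    exacts [hb ⟨i, h.symm⟩, hc i h.symm]
  · exact ⟨_, Or.inr ⟨i, rfl⟩, Sym2.mem_mk_left _ _⟩

variable [Finite V]

theorem IsMaximumMatching.matchingSwitch (hM : IsMaximumMatching G M)
    (ha_inj : Function.Injective a) (hb_inj : Function.Injective b)
    (hab : ∀ i, G.Adj (a i) (b i)) (ha : ∀ i, ¬ CoveredBy M (a i))
    (hbc : ∀ i, s(b i, c i) ∈ M) (hcb : ∀ i j, c i ≠ b j) :
    IsMaximumMatching G (matchingSwitch M a b c) := by
  have hne : ∀ i j, a i ≠ b j := fun i j h => ha i (h ▸ ⟨_, hbc j, Sym2.mem_mk_left _ _⟩)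
  have hA : IsMatchingSet G (Set.range fun i => s(a i, b i)) := by
    refine ⟨Set.range_subset_iff.2 hab, ?_⟩
    rintro _ ⟨i, rfl⟩ _ ⟨j, rfl⟩ hij v hvi hvj
    have hij : i ≠ j := fun h => hij (h ▸ rfl)
    rcases Sym2.mem_iff.1 hvi with rfl | rfl <;> rcases Sym2.mem_iff.1 hvj with h | h
    exacts [hij (ha_inj h), hne i j h, hne j i h.symm, hij (hb_inj h)]
  have hAR : ∀ e ∈ Set.range (fun i => s(a i, b i)), ∀ f ∈ M, ∀ v ∈ e, v ∈ f →
      f ∈ Set.range (fun i => s(b i, c i)) := by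
    rintro _ ⟨i, rfl⟩ f hf v hv hvf
    rcases Sym2.mem_iff.1 hv with rfl | rfl
    · exact (ha i ⟨f, hf, hvf⟩).elim
    · exact ⟨i, hM.1.eq_of_mem_of_mem (hbc i) hf (Sym2.mem_mk_left _ _) hvf⟩
  have hA_card : (Set.range fun i => s(a i, b i)).ncard = Nat.card ι := by
    refine Set.ncard_range_of_injective fun i j h => ?_
    rcases Sym2.eq_iff.1 h with ⟨h, -⟩ | ⟨h, -⟩
    exacts [ha_inj h, (hne i j h).elim]
  have hR_card : (Set.range fun i => s(b i, c i)).ncard = Nat.card ι := by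
    refine Set.ncard_range_of_injective fun i j h => ?_
    rcases Sym2.eq_iff.1 h with ⟨h, -⟩ | ⟨h, -⟩
    exacts [hb_inj h, (hcb j i h.symm).elim]
  have hcard := ncard_sdiff_union_add_ncard (Set.range_subset_iff.2 hbc) hAR
  exact ⟨hM.1.sdiff_union hA hAR, fun N hN => by
    have := hM.2 N hN
    rw [_root_.matchingSwitch]
    omega⟩

theorem IsMaximumMatching.eq_of_adj_of_adj (hM : IsMaximumMatching G M)
    (hvy : s(v, y) ∈ M) (huv : G.Adj u v) (hyw : G.Adj y w) (hu : ¬ CoveredBy M u)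
    (hw : ¬ CoveredBy M w) : u = w := by
  by_contra huw
  have hyv : y ≠ v := (G.ne_of_adj (hM.1.1 hvy)).symm
  -- after trading `vy` for `uv`, the edge `yw` joins two uncovered vertices
  set M' := _root_.matchingSwitch M (fun _ : Unit => u) (fun _ => v) (fun _ => y)
  have hM' : IsMaximumMatching G M' := hM.matchingSwitch (fun _ _ _ => rfl) (fun _ _ _ => rfl)
    (fun _ => huv) (fun _ => hu) (fun _ => hvy) (fun _ _ => hyv)
  have hw' : ¬ CoveredBy M' w := by
    intro hcov
    obtain ⟨x, hx⟩ := coveredBy_iff.1 hcov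
    refine hw (coveredBy_iff.2 ⟨x, (mk_mem_matchingSwitch_iff (fun _ => huw) ?_ ?_).1 hx⟩)
    · rintro - rfl
      exact hw ⟨_, hvy, Sym2.mem_mk_left _ _⟩
    · rintro - rfl
      exact hw ⟨_, hvy, Sym2.mem_mk_right _ _⟩
  exact hM'.not_adj_of_not_coveredBy
    (not_coveredBy_matchingSwitch hM.1 (fun _ => hu) (fun _ => hvy) (fun _ _ => hyv) ()) hw' hyw

end Switch

section MaximumDegreeFour

variable {V : Type*} [Finite V] {G : SimpleGraph V} {M : Set (Sym2 V)} {u v w y v₀ : V}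

theorem IsMaximumMatching.not_adj_of_ncard_eq_four
    (hΔ : ∀ v, (G.neighborSet v).ncard ≤ 4) (hM : IsMaximumMatching G M)
    (hu : ((G.deleteEdges M).neighborSet u).ncard = 4)
    (hw : ((G.deleteEdges M).neighborSet w).ncard = 4) : ¬ (G.deleteEdges M).Adj u w :=
  fun huw => hM.not_adj_of_not_coveredBy (not_coveredBy_of_ncard_eq_four (hΔ u) hM.1 hu)
    (not_coveredBy_of_ncard_eq_four (hΔ w) hM.1 hw) (deleteEdges_adj.1 huw).1

theorem ncard_eq_three_or_four_of_mem_badVertices (hΔ : (G.neighborSet v).ncard ≤ 4)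
    (hv : v ∈ (G.deleteEdges M).badVertices) :
    ((G.deleteEdges M).neighborSet v).ncard = 3 ∨
      ((G.deleteEdges M).neighborSet v).ncard = 4 := by
  have hgood := hv v .rfl
  have hle := ncard_neighborSet_deleteEdges_le (G := G) (M := M) v
  simp only [IsGoodVertex, not_or] at hgood
  omega

theorem ncard_eq_three_of_adj_of_mem_badVertices (hΔ : ∀ v, (G.neighborSet v).ncard ≤ 4)
    (hM : IsMaximumMatching G M) (hv : v ∈ (G.deleteEdges M).badVertices)
    (h4 : ((G.deleteEdges M).neighborSet v).ncard = 4) (hvw : (G.deleteEdges M).Adj v w) :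
    ((G.deleteEdges M).neighborSet w).ncard = 3 :=
  (ncard_eq_three_or_four_of_mem_badVertices (hΔ w)
    (mem_badVertices_of_reachable hv hvw.reachable)).resolve_right
    fun hw => hM.not_adj_of_ncard_eq_four hΔ h4 hw hvw

theorem not_coveredBy_of_adj_of_mem_badVertices (hΔ : (G.neighborSet w).ncard ≤ 4)
    (hM : IsMatchingSet G M) (hv : v ∈ (G.deleteEdges M).badVertices)
    (h3 : ((G.deleteEdges M).neighborSet v).ncard = 3) (hvw : (G.deleteEdges M).Adj v w) :
    ¬ CoveredBy M w :=
  not_coveredBy_of_ncard_eq_four hΔ hM (ncard_eq_four_of_adj_of_mem_badVertices hv h3 hvw)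

theorem coveredBy_of_mem_badVertices (hΔ : ∀ v, (G.neighborSet v).ncard ≤ 4)
    (hM : IsMaximumMatching G M) (hv : v ∈ (G.deleteEdges M).badVertices)
    (h3 : ((G.deleteEdges M).neighborSet v).ncard = 3) : CoveredBy M v := by
  obtain ⟨w, hvw⟩ := Set.nonempty_of_ncard_ne_zero (s := (G.deleteEdges M).neighborSet v)
    (by omega)
  by_contra hcov
  exact hM.not_adj_of_not_coveredBy hcov
    (not_coveredBy_of_adj_of_mem_badVertices (hΔ w) hM.1 hv h3 hvw) (deleteEdges_adj.1 hvw).1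

theorem not_reachable_of_mk_mem_of_mem_badVertices (hΔ : ∀ v, (G.neighborSet v).ncard ≤ 4)
    (hM : IsMaximumMatching G M) (hv : v ∈ (G.deleteEdges M).badVertices)
    (h3 : ((G.deleteEdges M).neighborSet v).ncard = 3) (hvy : s(v, y) ∈ M) :
    ¬ (G.deleteEdges M).Reachable v y := by
  intro hr
  have hy := mem_badVertices_of_reachable hv hr
  have hy3 : ((G.deleteEdges M).neighborSet y).ncard = 3 :=
    (ncard_eq_three_or_four_of_mem_badVertices (hΔ y) hy).resolve_right fun h4 =>
      not_coveredBy_of_ncard_eq_four (hΔ y) hM.1 h4 ⟨_, hvy, Sym2.mem_mk_right v y⟩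
  obtain ⟨w, hyw⟩ := Set.nonempty_of_ncard_ne_zero (s := (G.deleteEdges M).neighborSet y)
    (by omega)
  obtain ⟨u, hvu, huw⟩ := Set.exists_ne_of_one_lt_ncard
    (s := (G.deleteEdges M).neighborSet v) (by omega) w
  exact huw (hM.eq_of_adj_of_adj hvy (deleteEdges_adj.1 hvu).1.symm (deleteEdges_adj.1 hyw).1
    (not_coveredBy_of_adj_of_mem_badVertices (hΔ u) hM.1 hv h3 hvu)
    (not_coveredBy_of_adj_of_mem_badVertices (hΔ w) hM.1 hy hy3 hyw))

theorem ncard_neighborSet_eq_four_of_mem_badVertices (hΔ : ∀ v, (G.neighborSet v).ncard ≤ 4)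
    (hM : IsMaximumMatching G M) (hv : v ∈ (G.deleteEdges M).badVertices) :
    (G.neighborSet v).ncard = 4 := by
  have hle := ncard_neighborSet_deleteEdges_le (G := G) (M := M) v
  have hΔv := hΔ v
  rcases ncard_eq_three_or_four_of_mem_badVertices hΔv hv with h3 | h4
  · have := ncard_neighborSet_deleteEdges_of_coveredBy hM.1
      (coveredBy_of_mem_badVertices hΔ hM hv h3)
    omega
  · omega

theorem isGoodVertex_deleteEdges_of_coveredBy {M' : Set (Sym2 V)} {C : Set V}
    (hM : IsMatchingSet G M) (hM' : IsMatchingSet G M')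
    (hC : ∀ v ∈ C, ∀ w, (G.deleteEdges M).Adj v w → w ∈ C)
    (hdeg : ∀ v ∈ C, (G.neighborSet v).ncard = 4) (hcov : ∀ v ∈ C, CoveredBy M' v)
    (hv : v ∈ C) : (G.deleteEdges M').IsGoodVertex v := by
  have h3 : ∀ w ∈ C, ((G.deleteEdges M').neighborSet w).ncard = 3 := fun w hw => by
    rw [ncard_neighborSet_deleteEdges_of_coveredBy hM' (hcov w hw), hdeg w hw]
  refine Or.inr ⟨h3 v hv, ?_⟩
  calc {w | (G.deleteEdges M').Adj v w ∧ ((G.deleteEdges M').neighborSet w).ncard = 4}.ncard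
      ≤ {w | s(v, w) ∈ M}.ncard := Set.ncard_le_ncard fun w ⟨hvw, h4⟩ => by
        by_contra hvwM
        have := h3 w (hC v hv w (deleteEdges_adj.2 ⟨(deleteEdges_adj.1 hvw).1, hvwM⟩))
        omega
    _ ≤ 2 := (hM.ncard_setOf_mk_mem_le_one v).trans one_le_two

theorem exists_isMaximumMatching_badVertices_ssubset (hΔ : ∀ v, (G.neighborSet v).ncard ≤ 4)
    (hM : IsMaximumMatching G M) (hv₀ : v₀ ∈ (G.deleteEdges M).badVertices) :
    ∃ M', IsMaximumMatching G M' ∧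
      (G.deleteEdges M').badVertices ⊂ (G.deleteEdges M).badVertices := by
  set H := G.deleteEdges M
  set C : Set V := {v | H.Reachable v₀ v}
  have hbad : ∀ v ∈ C, v ∈ H.badVertices := fun v hv => mem_badVertices_of_reachable hv₀ hv
  set D : Set V := {v | v ∈ C ∧ (H.neighborSet v).ncard = 4}
  obtain ⟨σ, hσ_inj, hσ_adj⟩ := H.exists_injective_adj_of_ncard_neighborSet_le four_pos
    (fun v => (ncard_neighborSet_deleteEdges_le v).trans (hΔ v)) (s := D) fun v hv => hv.2
  have hσC : ∀ i, σ i ∈ C := fun i => i.2.1.trans (hσ_adj i).reachable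
  have hσ3 : ∀ i, (H.neighborSet (σ i)).ncard = 3 := fun i =>
    ncard_eq_three_of_adj_of_mem_badVertices hΔ hM (hbad i i.2.1) i.2.2 (hσ_adj i)
  have hpartner : ∀ i, ∃ y, s(σ i, y) ∈ M ∧ y ∉ C := fun i => by
    have hσbad := hbad _ (hσC i)
    obtain ⟨y, hy⟩ := coveredBy_iff.1 (coveredBy_of_mem_badVertices hΔ hM hσbad (hσ3 i))
    exact ⟨y, hy, fun hyC => not_reachable_of_mk_mem_of_mem_badVertices hΔ hM hσbad (hσ3 i) hy
      ((hσC i).symm.trans hyC)⟩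
  choose y hyM hyC using hpartner
  have hyσ : ∀ i j, y i ≠ σ j := fun i j h => hyC i (h ▸ hσC j)
  have hC4 : ∀ i : D, ¬ CoveredBy M i := fun i => not_coveredBy_of_ncard_eq_four (hΔ i) hM.1 i.2.2
  set M' := matchingSwitch M Subtype.val σ y
  have hM' : IsMaximumMatching G M' := hM.matchingSwitch Subtype.val_injective hσ_inj
    (fun i => (deleteEdges_adj.1 (hσ_adj i)).1) hC4 hyM hyσ
  have hcov : ∀ v ∈ C, CoveredBy M' v := fun v hv => by
    refine coveredBy_matchingSwitch ?_ fun i h => hyC i (h ▸ hv)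
    rcases ncard_eq_three_or_four_of_mem_badVertices (hΔ v) (hbad v hv) with h3 | h4
    exacts [Or.inl (coveredBy_of_mem_badVertices hΔ hM (hbad v hv) h3), Or.inr ⟨⟨v, hv, h4⟩, rfl⟩]
  have hgood : ∀ v ∈ C, (G.deleteEdges M').IsGoodVertex v :=
    fun v => isGoodVertex_deleteEdges_of_coveredBy hM.1 hM'.1
      (fun v hv w hvw => hv.trans hvw.reachable)
      (fun v hv => ncard_neighborSet_eq_four_of_mem_badVertices hΔ hM (hbad v hv)) hcov
  refine ⟨M', hM', badVertices_ssubset_of_adj_iff (S := C ∪ Set.range y) ?_ ?_ (.inl .rfl) hv₀⟩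
  · intro a ha b
    rw [Set.mem_union, not_or] at ha
    have hab : s(a, b) ∈ M' ↔ s(a, b) ∈ M := mk_mem_matchingSwitch_iff
      (fun i h => ha.1 (h ▸ i.2.1)) (fun i h => ha.1 (h ▸ hσC i)) (fun i h => ha.2 ⟨i, h⟩)
    simp only [H, deleteEdges_adj, hab]
  · rintro a (haC | ⟨i, rfl⟩)
    · exact ⟨a, .rfl, hgood a haC⟩
    · refine ⟨σ i, Adj.reachable (deleteEdges_adj.2 ⟨(hM.1.1 (hyM i)).symm, ?_⟩),
        hgood _ (hσC i)⟩
      exact fun h => not_coveredBy_matchingSwitch hM.1 hC4 hyM hyσ i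
        ⟨_, h, Sym2.mem_mk_left _ _⟩

theorem exists_isMaximumMatching_badVertices_eq_empty
    (hΔ : ∀ v, (G.neighborSet v).ncard ≤ 4) :
    ∃ M, IsMaximumMatching G M ∧ (G.deleteEdges M).badVertices = ∅ := by
  obtain ⟨M, hM, hmin⟩ := Set.exists_min_image {M | IsMaximumMatching G M}
    (fun M => (G.deleteEdges M).badVertices.ncard) (Set.toFinite _) (exists_isMaximumMatching G)
  refine ⟨M, hM, Set.eq_empty_of_forall_notMem fun v hv => ?_⟩
  obtain ⟨M', hM', hlt⟩ := exists_isMaximumMatching_badVertices_ssubset hΔ hM hv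
  exact (hmin M' hM').not_gt (Set.ncard_lt_ncard hlt)

end MaximumDegreeFour

/-- **Lemma.** Let `G` be a graph with maximum degree at most 4. Then there is a maximum
matching `M` of `G` such that every connected component of `G \ M` contains a vertex `v`
with either (a) `deg_{G\M}(v) ≤ 2`, or (b) `deg_{G\M}(v) = 3` and `v` has at most two
neighbours of degree 4 in `G \ M`. Moreover, for any maximum matching `M` of `G`, no two
vertices of degree 4 in `G \ M` are adjacent in `G \ M`. -/
theorem maximum_matching_good_components {V : Type*} [Fintype V]
    (G : SimpleGraph V) (hΔ : ∀ v : V, (G.neighborSet v).ncard ≤ 4) :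
    (∃ M : Set (Sym2 V), IsMaximumMatching G M ∧
      ∀ c : (G.deleteEdges M).ConnectedComponent,
        ∃ v : V, (G.deleteEdges M).connectedComponentMk v = c ∧
          (((G.deleteEdges M).neighborSet v).ncard ≤ 2 ∨
            (((G.deleteEdges M).neighborSet v).ncard = 3 ∧
              {u : V | (G.deleteEdges M).Adj v u ∧
                ((G.deleteEdges M).neighborSet u).ncard = 4}.ncard ≤ 2))) ∧
    (∀ M : Set (Sym2 V), IsMaximumMatching G M →
      ∀ u w : V, (G.deleteEdges M).Adj u w →
        ¬(((G.deleteEdges M).neighborSet u).ncard = 4 ∧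
          ((G.deleteEdges M).neighborSet w).ncard = 4)) := by
  refine ⟨?_, fun M hM u w huw ⟨hu, hw⟩ => hM.not_adj_of_ncard_eq_four hΔ hu hw huw⟩
  obtain ⟨M, hM, hbad⟩ := exists_isMaximumMatching_badVertices_eq_empty hΔ
  refine ⟨M, hM, fun c => c.ind fun v => ?_⟩
  have hv : v ∉ (G.deleteEdges M).badVertices := hbad ▸ Set.notMem_empty v
  simp only [badVertices, Set.mem_ofPred_eq, not_forall, not_not] at hv
  obtain ⟨w, hvw, hw⟩ := hv
  exact ⟨w, (ConnectedComponent.sound hvw).symm, hw⟩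
end
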